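/- arXiv:1804.07469 — 6 statements merged into one kernel-verified Lean document; each statement's English description precedes it below -/
import Mathlib

section
/- Let λ > 0 and μ > 0, and let F : ℝ × ℝ → ℝ × ℝ be the constant-mobility vector field F(z,m) = ((μ/2)·z·|z| + λ·z + 2·m, −μ·m·|z| − μ·z). A point (z,m) with m ∈ [−1,1] satisfies F(z,m) = (0,0) if and only if (z,m) = (0,0), or (z,m) = (z₀, −1), or (z,m) = (−z₀, 1), where z₀ = (√(λ² + 4μ) − λ)/μ. -/
/-!
The field is odd, `F(-z, -m) = -F(z, m)`, so it suffices to treat `z ≥ 0`. At `z = 0` the first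
component reduces to `2m`. For `z > 0` the second component is `-μ z (m + 1)`, forcing `m = -1`,
and the first then becomes the quadratic `(μ/2) z² + λ z - 2 = 0`, whose only positive root is `z₀`.
-/

namespace ConstantMobility

variable {lam mu : ℝ}

noncomputable def field (lam mu : ℝ) (p : ℝ × ℝ) : ℝ × ℝ :=
  ((mu / 2) * p.1 * |p.1| + lam * p.1 + 2 * p.2, -(mu * p.2 * |p.1|) - mu * p.1)

/-- The paper's `z₀`. -/
noncomputable def equilibriumAbscissa (lam mu : ℝ) : ℝ :=
  (Real.sqrt (lam ^ 2 + 4 * mu) - lam) / mu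

theorem field_neg (p : ℝ × ℝ) : field lam mu (-p) = -field lam mu p := by
  simp only [field, Prod.fst_neg, Prod.snd_neg, abs_neg, Prod.neg_mk]
  congr 1 <;> ring

theorem lt_sqrt_sq_add (hmu : 0 < mu) : lam < Real.sqrt (lam ^ 2 + 4 * mu) := by
  calc lam ≤ |lam| := le_abs_self lam
    _ = Real.sqrt (lam ^ 2) := (Real.sqrt_sq_eq_abs lam).symm
    _ < Real.sqrt (lam ^ 2 + 4 * mu) := Real.sqrt_lt_sqrt (sq_nonneg lam) (by linarith)

theorem equilibriumAbscissa_pos (hmu : 0 < mu) : 0 < equilibriumAbscissa lam mu :=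
  div_pos (sub_pos.2 (lt_sqrt_sq_add hmu)) hmu

theorem quadratic_eq_zero_iff_eq_equilibriumAbscissa (hmu : 0 < mu) {z : ℝ} (hz : 0 < z) :
    (mu / 2) * (z * z) + lam * z + (-2) = 0 ↔ z = equilibriumAbscissa lam mu := by
  set s := Real.sqrt (lam ^ 2 + 4 * mu)
  have hdiscrim : discrim (mu / 2) lam (-2) = s * s := by
    rw [discrim, Real.mul_self_sqrt (by positivity)]
    ring
  have hroot : (-lam + s) / (2 * (mu / 2)) = equilibriumAbscissa lam mu := by
    rw [equilibriumAbscissa, show 2 * (mu / 2) = mu by ring, neg_add_eq_sub]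
  have hneg : (-lam - s) / (2 * (mu / 2)) < 0 := by
    have := lt_sqrt_sq_add (lam := -lam) hmu
    rw [neg_sq] at this
    exact div_neg_of_neg_of_pos (by linarith) (by positivity)
  rw [quadratic_eq_zero_iff (by positivity) hdiscrim, hroot]
  exact or_iff_left fun h => (hneg.trans hz).ne' h

theorem field_eq_zero_iff_of_pos (hmu : 0 < mu) {z : ℝ} (hz : 0 < z) (m : ℝ) :
    field lam mu (z, m) = 0 ↔ z = equilibriumAbscissa lam mu ∧ m = -1 := by
  have hsecond : -(mu * m * |z|) - mu * z = -(mu * z) * (m + 1) := by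
    rw [abs_of_pos hz]
    ring
  simp only [field, Prod.mk_eq_zero, hsecond, mul_eq_zero, neg_eq_zero, hmu.ne', hz.ne',
    false_or, add_eq_zero_iff_eq_neg]
  constructor
  · rintro ⟨hfirst, rfl⟩
    refine ⟨(quadratic_eq_zero_iff_eq_equilibriumAbscissa hmu hz).1 ?_, rfl⟩
    rw [abs_of_pos hz] at hfirst
    linarith
  · rintro ⟨rfl, rfl⟩
    refine ⟨?_, rfl⟩
    have := (quadratic_eq_zero_iff_eq_equilibriumAbscissa hmu hz).2 rfl
    rw [abs_of_pos hz]
    linarith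

theorem field_zero_left_eq_zero_iff (m : ℝ) : field lam mu (0, m) = 0 ↔ m = 0 := by
  simp [field]

end ConstantMobility

open ConstantMobility in
theorem constant_mobility_fixed_points_general (lam mu : ℝ) (hmu : 0 < mu)
    (z m : ℝ) :
    ((mu / 2) * z * |z| + lam * z + 2 * m = 0 ∧ -(mu * m * |z|) - mu * z = 0) ↔
      ((z = 0 ∧ m = 0) ∨
        (z = (Real.sqrt (lam ^ 2 + 4 * mu) - lam) / mu ∧ m = -1) ∨
        (z = -((Real.sqrt (lam ^ 2 + 4 * mu) - lam) / mu) ∧ m = 1)) := by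
  have hz₀ := equilibriumAbscissa_pos (lam := lam) hmu
  have hfield : ((mu / 2) * z * |z| + lam * z + 2 * m = 0 ∧ -(mu * m * |z|) - mu * z = 0) ↔
      field lam mu (z, m) = 0 := by
    simp only [field, Prod.mk_eq_zero]
  rw [hfield, ← equilibriumAbscissa]
  rcases lt_trichotomy z 0 with hz | rfl | hz
  · rw [← neg_eq_zero, ← field_neg, Prod.neg_mk, field_eq_zero_iff_of_pos hmu (neg_pos.2 hz)]
    constructor
    · rintro ⟨hz', hm'⟩
      exact Or.inr (Or.inr ⟨by linarith, by linarith⟩)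
    · rintro (⟨rfl, -⟩ | ⟨rfl, -⟩ | ⟨rfl, rfl⟩) <;> first | linarith | exact ⟨neg_neg _, rfl⟩
  · rw [field_zero_left_eq_zero_iff]
    simp [hz₀.ne, hz₀.ne']
  · rw [field_eq_zero_iff_of_pos hmu hz]
    constructor
    · exact fun h => Or.inr (Or.inl h)
    · rintro (⟨rfl, -⟩ | h | ⟨rfl, -⟩) <;> first | exact h | linarith

/-- Fixed points of the constant-mobility vector field
`F(z,m) = ((μ/2)·z·|z| + λ·z + 2·m, −μ·m·|z| − μ·z)` in the strip `m ∈ [−1,1]`: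
they are exactly the origin and `(±z₀, ∓1)` with `z₀ = (√(λ² + 4μ) − λ)/μ`. -/
theorem constant_mobility_fixed_points (lam mu : ℝ) (hlam : 0 < lam) (hmu : 0 < mu)
    (z m : ℝ) (hm : m ∈ Set.Icc (-1 : ℝ) 1) :
    ((mu / 2) * z * |z| + lam * z + 2 * m = 0 ∧ -(mu * m * |z|) - mu * z = 0) ↔
      ((z = 0 ∧ m = 0) ∨
        (z = (Real.sqrt (lam ^ 2 + 4 * mu) - lam) / mu ∧ m = -1) ∨
        (z = -((Real.sqrt (lam ^ 2 + 4 * mu) - lam) / mu) ∧ m = 1)) :=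
  constant_mobility_fixed_points_general lam mu hmu z m
end

section
/- Let λ > 0, μ > 0 and set z₀ = (√(λ² + 4μ) − λ)/μ. The constant-mobility vector field F(z,m) = ((μ/2)·z·|z| + λ·z + 2·m, −μ·m·|z| − μ·z) is Fréchet differentiable at the fixed point Q = (z₀, −1), its derivative is represented by the matrix [[μ·z₀ + λ, 2], [0, −μ·z₀]], and this matrix has one strictly positive real eigenvalue (namely μ·z₀ + λ) and one strictly negative real eigenvalue (namely −μ·z₀); in particular its determinant −μ·z₀·(μ·z₀ + λ) is negative, so Q is a saddle point. -/
open ContinuousLinearMap in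
/-- The constant-mobility vector field is Fréchet differentiable at the fixed point
`Q = (z₀, −1)`, `z₀ = (√(λ² + 4μ) − λ)/μ`, with derivative represented by the matrix
`[[μ·z₀ + λ, 2], [0, −μ·z₀]]`, which has one strictly positive real eigenvalue
`μ·z₀ + λ` and one strictly negative real eigenvalue `−μ·z₀`; in particular its
determinant `−μ·z₀·(μ·z₀ + λ)` is negative, so `Q` is a saddle point. -/
theorem constant_mobility_saddle_Q (lam mu : ℝ) (hlam : 0 < lam) (hmu : 0 < mu) :
    let z₀ : ℝ := (Real.sqrt (lam ^ 2 + 4 * mu) - lam) / mu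
    let F : ℝ × ℝ → ℝ × ℝ := fun p =>
      ((mu / 2) * p.1 * |p.1| + lam * p.1 + 2 * p.2, -(mu * p.2 * |p.1|) - mu * p.1)
    let A : Matrix (Fin 2) (Fin 2) ℝ := !![mu * z₀ + lam, 2; 0, -(mu * z₀)]
    ∃ L : ℝ × ℝ →L[ℝ] ℝ × ℝ,
      HasFDerivAt F L (z₀, -1) ∧
      (∀ v : ℝ × ℝ, L v = (A 0 0 * v.1 + A 0 1 * v.2, A 1 0 * v.1 + A 1 1 * v.2)) ∧
      Module.End.HasEigenvalue (Matrix.toLin' A) (mu * z₀ + lam) ∧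
      0 < mu * z₀ + lam ∧
      Module.End.HasEigenvalue (Matrix.toLin' A) (-(mu * z₀)) ∧
      -(mu * z₀) < 0 ∧
      A.det = -(mu * z₀) * (mu * z₀ + lam) ∧
      A.det < 0 := by
  intro z₀ F A
  have hsq : lam < Real.sqrt (lam ^ 2 + 4 * mu) := by
    have : lam ^ 2 < lam ^ 2 + 4 * mu := by linarith
    exact (Real.lt_sqrt hlam.le).mpr this
  have hz : 0 < z₀ := div_pos (by linarith) hmu
  -- the explicit derivative
  set L : ℝ × ℝ →L[ℝ] ℝ × ℝ :=
    (((mu * z₀ + lam) • fst ℝ ℝ ℝ + (2 : ℝ) • snd ℝ ℝ ℝ).prod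
      ((-(mu * z₀)) • snd ℝ ℝ ℝ)) with hL
  have hLv : ∀ v : ℝ × ℝ, L v = ((mu * z₀ + lam) * v.1 + 2 * v.2, -(mu * z₀) * v.2) := by
    intro v; simp [hL]
  refine ⟨L, ?_, ?_, ?_, ?_, ?_, ?_, ?_, ?_⟩
  · -- differentiability: F agrees with a polynomial map near (z₀, -1)
    have hG : HasFDerivAt (fun p : ℝ × ℝ =>
        ((mu / 2) * p.1 * p.1 + lam * p.1 + 2 * p.2, -(mu * p.2 * p.1) - mu * p.1)) L
        (z₀, -1) := by
      have hf : HasFDerivAt (fun p : ℝ × ℝ => p.1) (fst ℝ ℝ ℝ) (z₀, -1) := hasFDerivAt_fst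
      have hs : HasFDerivAt (fun p : ℝ × ℝ => p.2) (snd ℝ ℝ ℝ) (z₀, -1) := hasFDerivAt_snd
      have h1 : HasFDerivAt (fun p : ℝ × ℝ => (mu / 2) * p.1 * p.1 + lam * p.1 + 2 * p.2)
          ((mu * z₀ + lam) • fst ℝ ℝ ℝ + (2 : ℝ) • snd ℝ ℝ ℝ) (z₀, -1) := by
        have := (((hf.const_mul (mu / 2)).mul hf).add (hf.const_mul lam)).add
          (hs.const_mul 2)
        refine this.congr_fderiv ?_
        ext v <;> simp <;> ring
      have h2 : HasFDerivAt (fun p : ℝ × ℝ => -(mu * p.2 * p.1) - mu * p.1)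
          ((-(mu * z₀)) • snd ℝ ℝ ℝ) (z₀, -1) := by
        have := (((hs.const_mul mu).mul hf).neg).sub (hf.const_mul mu)
        refine this.congr_fderiv ?_
        ext v <;> simp <;> ring
      exact h1.prodMk h2
    refine hG.congr_of_eventuallyEq ?_
    have hopen : {p : ℝ × ℝ | 0 < p.1} ∈ nhds ((z₀ : ℝ), (-1 : ℝ)) :=
      (isOpen_lt continuous_const continuous_fst).mem_nhds hz
    filter_upwards [hopen] with p hp
    simp only [F]
    rw [abs_of_pos hp]
  · intro v
    rw [hLv v]
    simp [A, Matrix.cons_val_zero, Matrix.cons_val_one]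
  · refine Module.End.hasEigenvalue_of_hasEigenvector (x := ![1, 0]) ⟨?_, ?_⟩
    · rw [Module.End.mem_eigenspace_iff]
      funext i
      fin_cases i <;>
        simp [A, Matrix.toLin'_apply, Matrix.mulVec, dotProduct, Fin.sum_univ_two]
    · intro h
      have := congrFun h 0
      simp at this
  · positivity
  · refine Module.End.hasEigenvalue_of_hasEigenvector
      (x := ![-2 / (2 * mu * z₀ + lam), 1]) ⟨?_, ?_⟩
    · rw [Module.End.mem_eigenspace_iff]
      have hd : 2 * mu * z₀ + lam ≠ 0 := by positivity
      funext i
      fin_cases i <;>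
        simp [A, Matrix.toLin'_apply, Matrix.mulVec, dotProduct, Fin.sum_univ_two] <;>
        field_simp <;> ring
    · intro h
      have := congrFun h 1
      simp at this
  · have h1 : 0 < mu * z₀ := mul_pos hmu hz
    linarith
  · simp [A, Matrix.det_fin_two]; ring
  · have h1 : 0 < mu * z₀ := mul_pos hmu hz
    have : A.det = -(mu * z₀) * (mu * z₀ + lam) := by simp [A, Matrix.det_fin_two]; ring
    rw [this]
    nlinarith
end

section
/- Let λ > 0 and 0 < μ ≤ λ²/8 (low mobility regime), and let m₀ ∈ [−1,1] with m₀ ≠ 0. If (z₁, m₁) and (z₂, m₂) are two solutions of the constant-mobility system on [0,∞) (i.e. zᵢ'(t) = (μ/2)·zᵢ(t)·|zᵢ(t)| + λ·zᵢ(t) + 2·mᵢ(t) and mᵢ'(t) = −μ·mᵢ(t)·|zᵢ(t)| − μ·zᵢ(t) for all t ≥ 0) which are both bounded on [0,∞) and satisfy m₁(0) = m₂(0) = m₀, then (z₁, m₁) = (z₂, m₂); that is, the bounded solution with prescribed initial mean m₀ is unique. -/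
open Set Real

lemma CMU_quad_nonneg (A B C w n : ℝ) (hA : 0 < A) (h : B^2 ≤ 4*A*C) :
    0 ≤ A*w^2 + B*(w*n) + C*n^2 := by
  nlinarith [sq_nonneg (2*A*w + B*n), sq_nonneg n, mul_pos hA hA, sq_nonneg w]

lemma CMU_monoIcc {a b : ℝ} {f f' : ℝ → ℝ}
    (hd : ∀ t ∈ Icc a b, HasDerivWithinAt f (f' t) (Icc a b) t)
    (h0 : ∀ t ∈ Ioo a b, 0 ≤ f' t) : MonotoneOn f (Icc a b) := by
  apply monotoneOn_of_hasDerivWithinAt_nonneg (convex_Icc a b)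
    (fun t ht => (hd t ht).continuousWithinAt)
  · intro x hx
    rw [interior_Icc] at hx
    exact (hd x (Ioo_subset_Icc_self hx)).mono interior_subset
  · intro x hx
    rw [interior_Icc] at hx
    exact h0 x hx

lemma CMU_antiIcc {a b : ℝ} {f f' : ℝ → ℝ}
    (hd : ∀ t ∈ Icc a b, HasDerivWithinAt f (f' t) (Icc a b) t)
    (h0 : ∀ t ∈ Ioo a b, f' t ≤ 0) : AntitoneOn f (Icc a b) := by
  apply antitoneOn_of_hasDerivWithinAt_nonpos (convex_Icc a b)
    (fun t ht => (hd t ht).continuousWithinAt)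
  · intro x hx
    rw [interior_Icc] at hx
    exact (hd x (Ioo_subset_Icc_self hx)).mono interior_subset
  · intro x hx
    rw [interior_Icc] at hx
    exact h0 x hx

lemma CMU_expDeriv {s : Set ℝ} {t c f' : ℝ} {f : ℝ → ℝ}
    (hf : HasDerivWithinAt f f' s t) :
    HasDerivWithinAt (fun u => f u * Real.exp (c*u)) ((f' + c * f t) * Real.exp (c*t)) s t := by
  have hi : HasDerivAt (fun u : ℝ => c * u) c t := by
    simpa using (hasDerivAt_id t).const_mul c
  have he : HasDerivAt (fun u : ℝ => Real.exp (c*u)) (Real.exp (c*t) * c) t :=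
    (Real.hasDerivAt_exp (c*t)).comp t hi
  have := hf.mul he.hasDerivWithinAt
  refine this.congr_deriv ?_
  ring

lemma CMU_decay {a b L : ℝ} {g g' : ℝ → ℝ}
    (hd : ∀ t ∈ Icc a b, HasDerivWithinAt g (g' t) (Icc a b) t)
    (hle : ∀ t ∈ Ioo a b, g' t ≤ L * g t)
    (h0 : g a ≤ 0) : ∀ t ∈ Icc a b, g t ≤ 0 := by
  intro t ht
  have hab : a ≤ b := le_trans ht.1 ht.2
  have hψd : ∀ u ∈ Icc a b, HasDerivWithinAt (fun v => g v * Real.exp (-L*v))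
      ((g' u + (-L) * g u) * Real.exp (-L*u)) (Icc a b) u := fun u hu => CMU_expDeriv (hd u hu)
  have hanti : AntitoneOn (fun v => g v * Real.exp (-L*v)) (Icc a b) := by
    apply CMU_antiIcc hψd
    intro u hu
    have h1 : g' u + (-L) * g u ≤ 0 := by have := hle u hu; linarith
    exact mul_nonpos_of_nonpos_of_nonneg h1 (Real.exp_pos _).le
  have h2 : g t * Real.exp (-L*t) ≤ g a * Real.exp (-L*a) :=
    hanti (left_mem_Icc.mpr hab) ht ht.1
  have h3 : g a * Real.exp (-L*a) ≤ 0 := mul_nonpos_of_nonpos_of_nonneg h0 (Real.exp_pos _).le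
  nlinarith [Real.exp_pos (-L*t)]

lemma CMU_growth {lam B : ℝ} (hlam : 0 < lam) {g g' : ℝ → ℝ}
    (hd : ∀ t ∈ Ici (0:ℝ), HasDerivWithinAt g (g' t) (Ici 0) t)
    (hge : ∀ t ∈ Ici (0:ℝ), lam * g t ≤ g' t)
    (hB : ∀ t ∈ Ici (0:ℝ), |g t| ≤ B) :
    ∀ t ∈ Ici (0:ℝ), g t ≤ 0 := by
  intro t ht
  by_contra hpos
  push_neg at hpos
  have hBt : g t ≤ B := le_trans (le_abs_self _) (hB t ht)
  have hBpos : 0 < B := lt_of_lt_of_le hpos hBt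
  set s := t + (Real.log (B / g t) + 1)/lam with hs
  have hlog : 0 ≤ Real.log (B / g t) := Real.log_nonneg ((one_le_div hpos).mpr hBt)
  have hts : t ≤ s := by
    rw [hs]
    have : 0 ≤ (Real.log (B / g t) + 1)/lam := by positivity
    linarith
  have hsI : s ∈ Ici (0:ℝ) := le_trans ht hts
  have hmono : MonotoneOn (fun v => g v * Real.exp (-lam*v)) (Icc t s) := by
    apply CMU_monoIcc (f' := fun u => (g' u + (-lam) * g u) * Real.exp (-lam*u))
    · intro u hu
      exact CMU_expDeriv ((hd u (le_trans ht hu.1)).mono (fun x hx => le_trans ht hx.1))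
    · intro u hu
      have h1 : 0 ≤ g' u + (-lam) * g u := by
        have := hge u (le_trans ht hu.1.le); linarith
      exact mul_nonneg h1 (Real.exp_pos _).le
  have h2 : g t * Real.exp (-lam*t) ≤ g s * Real.exp (-lam*s) :=
    hmono (left_mem_Icc.mpr hts) (right_mem_Icc.mpr hts) hts
  -- g s ≥ g t * exp (lam*(s-t)) = B * e
  have h3 : g t * Real.exp (lam*s - lam*t) ≤ g s := by
    have : g t * Real.exp (-lam*t) * Real.exp (lam * s) ≤ g s * Real.exp (-lam*s) * Real.exp (lam*s) := by
      apply mul_le_mul_of_nonneg_right h2 (Real.exp_pos _).le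
    rw [mul_assoc, mul_assoc, ← Real.exp_add, ← Real.exp_add] at this
    have e2 : -lam*s + lam*s = 0 := by ring
    have e3 : -lam*t + lam*s = lam*s - lam*t := by ring
    rw [e2, e3, Real.exp_zero, mul_one] at this
    exact this
  have h4 : lam * s - lam * t = Real.log (B / g t) + 1 := by
    rw [hs]; field_simp; ring
  rw [h4, Real.exp_add, Real.exp_log (by positivity)] at h3
  have h5 : g t * (B / g t * Real.exp 1) = B * Real.exp 1 := by
    field_simp
  rw [h5] at h3
  have h6 : g s ≤ B := le_trans (le_abs_self _) (hB s hsI)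
  nlinarith [Real.exp_one_gt_d9,
    mul_pos hBpos (show (0:ℝ) < Real.exp 1 - 1 by nlinarith [Real.exp_one_gt_d9])]

lemma CMU_posSq (x : ℝ) : HasDerivAt (fun y : ℝ => (max y 0)^2) (2 * max x 0) x := by
  rcases lt_trichotomy x 0 with hx | hx | hx
  · have hmax : max x 0 = 0 := max_eq_right hx.le
    rw [hmax, mul_zero]
    have hev : (fun y : ℝ => (max y 0)^2) =ᶠ[nhds x] (fun _ => (0:ℝ)) := by
      filter_upwards [Iio_mem_nhds hx] with y hy
      simp [max_eq_right (le_of_lt (mem_Iio.mp hy))]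
    exact (hasDerivAt_const x (0:ℝ)).congr_of_eventuallyEq hev
  · subst hx
    rw [max_self, mul_zero]  -- max 0 0 = 0
    rw [hasDerivAt_iff_isLittleO]
    rw [Asymptotics.isLittleO_iff]
    intro c hc
    filter_upwards [Metric.ball_mem_nhds (0:ℝ) hc] with y hy
    simp only [Metric.mem_ball, Real.dist_eq, sub_zero] at hy
    have h1 : |max y 0| ≤ |y| := by
      rcases le_or_gt y 0 with h | h
      · simp [max_eq_right h]
      · simp [max_eq_left h.le, abs_of_pos h]
    have this2 : ‖(max y 0)^2 - (max (0:ℝ) 0)^2 - (y - 0) • (0:ℝ)‖ = |max y 0|^2 := by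
      simp [sq_abs]
    rw [this2]
    calc |max y 0|^2 ≤ |y| * |y| := by nlinarith [abs_nonneg y, abs_nonneg (max y 0)]
      _ ≤ c * |y| := by
          apply mul_le_mul_of_nonneg_right hy.le (abs_nonneg _)
      _ = c * ‖y - 0‖ := by simp
  · have hmax : max x 0 = x := max_eq_left hx.le
    rw [hmax]
    have hev : (fun y : ℝ => (max y 0)^2) =ᶠ[nhds x] (fun y => y^2) := by
      filter_upwards [Ioi_mem_nhds hx] with y hy
      simp [max_eq_left (le_of_lt (mem_Ioi.mp hy))]
    have : HasDerivAt (fun y : ℝ => y^2) (2*x) x := by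
      simpa using (hasDerivAt_pow 2 x)
    exact this.congr_of_eventuallyEq hev

lemma CMU_barrier {a b L : ℝ} {h h' : ℝ → ℝ}
    (hd : ∀ t ∈ Icc a b, HasDerivWithinAt h (h' t) (Icc a b) t)
    (hcond : ∀ t ∈ Ioo a b, 0 ≤ h t → h' t ≤ L * h t)
    (h0 : h a ≤ 0) : ∀ t ∈ Icc a b, h t ≤ 0 := by
  have hGd : ∀ t ∈ Icc a b, HasDerivWithinAt (fun u => (max (h u) 0)^2)
      (2 * max (h t) 0 * h' t) (Icc a b) t := by
    intro t ht
    exact (CMU_posSq (h t)).comp_hasDerivWithinAt t (hd t ht)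
  have key : ∀ t ∈ Icc a b, (max (h t) 0)^2 ≤ 0 := by
    apply CMU_decay (L := 2*L) hGd
    · intro t ht
      rcases le_or_gt 0 (h t) with hp | hn
      · have hmax : max (h t) 0 = h t := max_eq_left hp
        rw [hmax]
        have := hcond t ht hp
        nlinarith
      · have hmax : max (h t) 0 = 0 := max_eq_right hn.le
        rw [hmax]; ring_nf; positivity
    · have : max (h a) 0 = 0 := max_eq_right h0
      rw [this]; norm_num
  intro t ht
  have := key t ht
  have h1 : max (h t) 0 = 0 := by nlinarith [le_max_right (h t) 0]
  calc h t ≤ max (h t) 0 := le_max_left _ _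
    _ = 0 := h1

lemma CMU_gb (mu lam c Z S w n : ℝ) (hmu : 0 < mu) (hlam : 0 < lam)
    (hZ : -c ≤ Z) (hZ0 : Z ≤ 0) (hS0 : 0 ≤ S) (hS2 : S ≤ 2) :
    (2*lam - mu*Z)*w^2 + (4 + mu*(S-2))*(w*n) + mu*Z*n^2
      ≤ (2*lam + mu*c + 2 + mu) * (w^2 + n^2) := by
  have hc : 0 ≤ c + Z := by linarith
  rcases le_or_gt 0 (w*n) with hwn | hwn
  · nlinarith [mul_nonneg (mul_nonneg hmu.le hc) (sq_nonneg w),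
      mul_nonneg hmu.le (sq_nonneg w), mul_nonneg hmu.le (sq_nonneg n),
      sq_nonneg (w - n),
      mul_nonneg (mul_nonneg hmu.le (by linarith : (0:ℝ) ≤ 2 - S)) hwn,
      mul_nonneg hlam.le (sq_nonneg n),
      mul_nonneg (mul_nonneg hmu.le (by linarith : (0:ℝ) ≤ -Z)) (sq_nonneg n)]
  · nlinarith [mul_nonneg (mul_nonneg hmu.le hc) (sq_nonneg w),
      mul_nonneg hmu.le (sq_nonneg (w + n)),
      sq_nonneg (w - n),
      mul_nonneg (mul_nonneg hmu.le hS0) (by linarith : (0:ℝ) ≤ -(w*n)),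
      mul_nonneg hlam.le (sq_nonneg n),
      mul_nonneg (mul_nonneg hmu.le (by linarith : (0:ℝ) ≤ -Z)) (sq_nonneg n)]

lemma CMU_sq {s : Set ℝ} {t f' : ℝ} {f : ℝ → ℝ} (hf : HasDerivWithinAt f f' s t) :
    HasDerivWithinAt (fun u => (f u)^2) (2 * f t * f') s t := by
  have h := hf.pow 2
  norm_num at h
  exact h

lemma CMU_cone (lam mu : ℝ) (hlam : 0 < lam) (hmu : 0 < mu) (hlow : 8*mu ≤ lam^2)
    (z m : ℝ → ℝ) (C : ℝ)
    (hsol : ∀ t ∈ Ici (0:ℝ),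
      HasDerivWithinAt z ((mu / 2) * z t * |z t| + lam * z t + 2 * m t) (Ici 0) t ∧
      HasDerivWithinAt m (-(mu * m t * |z t|) - mu * z t) (Ici 0) t)
    (hbd : ∀ t ∈ Ici (0:ℝ), |z t| ≤ C ∧ |m t| ≤ C) :
    ∀ t ∈ Ici (0:ℝ), mu * (z t)^2 ≤ 2 * (m t)^2 := by
  have hC0 : 0 ≤ C := le_trans (abs_nonneg _) (hbd 0 (by norm_num)).1
  have key : ∀ t ∈ Ici (0:ℝ), mu * (z t)^2 - 2 * (m t)^2 ≤ 0 := by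
    apply CMU_growth (B := (mu+2)*C^2) hlam (g' := fun t =>
      mu * (2 * z t * ((mu / 2) * z t * |z t| + lam * z t + 2 * m t))
      - 2 * (2 * m t * (-(mu * m t * |z t|) - mu * z t)))
    · intro t ht
      exact ((CMU_sq (hsol t ht).1).const_mul mu).sub ((CMU_sq (hsol t ht).2).const_mul 2)
    · intro t ht
      have ha0 : 0 ≤ |z t| := abs_nonneg _
      have hzle : z t ≤ |z t| := le_abs_self _
      have hzge : -|z t| ≤ z t := neg_abs_le _
      have hiden : mu * (2 * z t * ((mu / 2) * z t * |z t| + lam * z t + 2 * m t))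
          - 2 * (2 * m t * (-(mu * m t * |z t|) - mu * z t))
          - lam * (mu * (z t)^2 - 2 * (m t)^2)
          = (mu^2 * |z t| + mu*lam) * (z t)^2 + (8*mu) * (z t * m t)
            + (4*mu*|z t| + 2*lam) * (m t)^2 := by ring
      have hquad : 0 ≤ (mu^2 * |z t| + mu*lam) * (z t)^2 + (8*mu) * (z t * m t)
            + (4*mu*|z t| + 2*lam) * (m t)^2 := by
        apply CMU_quad_nonneg
        · positivity
        · nlinarith [mul_pos hmu hlam, mul_nonneg (mul_nonneg hmu.le hmu.le) ha0,
            mul_nonneg (mul_nonneg (mul_nonneg hmu.le hmu.le) ha0) ha0,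
            mul_nonneg (mul_nonneg hmu.le hlam.le) ha0, sq_nonneg (z t)]
      linarith [hiden ▸ hquad]
    · intro t ht
      have h1 : (z t)^2 ≤ C^2 := by
        have := (hbd t ht).1
        nlinarith [abs_nonneg (z t), sq_abs (z t)]
      have h2 : (m t)^2 ≤ C^2 := by
        have := (hbd t ht).2
        nlinarith [abs_nonneg (m t), sq_abs (m t)]
      rw [abs_le]
      constructor <;> nlinarith [sq_nonneg (z t), sq_nonneg (m t)]
  intro t ht
  linarith [key t ht]

lemma CMU_signs (lam mu : ℝ) (hlam : 0 < lam) (hmu : 0 < mu) (hlow : 8*mu ≤ lam^2)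
    (z m : ℝ → ℝ) (C : ℝ)
    (hsol : ∀ t ∈ Ici (0:ℝ),
      HasDerivWithinAt z ((mu / 2) * z t * |z t| + lam * z t + 2 * m t) (Ici 0) t ∧
      HasDerivWithinAt m (-(mu * m t * |z t|) - mu * z t) (Ici 0) t)
    (hbd : ∀ t ∈ Ici (0:ℝ), |z t| ≤ C ∧ |m t| ≤ C)
    (hm0pos : 0 < m 0) (hm0le : m 0 ≤ 1) :
    ∀ t ∈ Ici (0:ℝ), (0 < m t ∧ m t ≤ 1) ∧ z t < 0 := by
  have hC0 : 0 ≤ C := le_trans (abs_nonneg _) (hbd 0 (by norm_num)).1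
  have hcone := CMU_cone lam mu hlam hmu hlow z m C hsol hbd
  -- m is never zero
  have hmne : ∀ t ∈ Ici (0:ℝ), m t ≠ 0 := by
    intro T hT hmT
    have hzT : z T = 0 := by
      have h1 := hcone T hT
      rw [hmT] at h1
      have h2 : z T ^ 2 = 0 := le_antisymm (by nlinarith) (sq_nonneg _)
      exact (pow_eq_zero_iff two_ne_zero).mp h2
    rcases eq_or_lt_of_le (mem_Ici.mp hT) with h0T | h0T
    · rw [← h0T] at hmT; exact absurd hmT (ne_of_gt hm0pos)
    -- backward Gronwall on [0,T]
    have hmem : ∀ s ∈ Icc (0:ℝ) T, T - s ∈ Icc (0:ℝ) T := by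
      intro s hs; exact ⟨by linarith [hs.2], by linarith [hs.1]⟩
    have hsub : Icc (0:ℝ) T ⊆ Ici 0 := Icc_subset_Ici_self
    have hσ : ∀ s ∈ Icc (0:ℝ) T, HasDerivWithinAt (fun u => T - u) (-1 : ℝ) (Icc (0:ℝ) T) s := by
      intro s hs
      simpa using ((hasDerivAt_id' (x := s)).const_sub T).hasDerivWithinAt
    have hg : ∀ s ∈ Icc (0:ℝ) T, HasDerivWithinAt
        (fun u => (z (T - u))^2 + (m (T - u))^2)
        ((2 * z (T - s) * ((mu / 2) * z (T-s) * |z (T-s)| + lam * z (T-s) + 2 * m (T-s))) * (-1)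
          + (2 * m (T - s) * (-(mu * m (T-s) * |z (T-s)|) - mu * z (T-s))) * (-1)) (Icc (0:ℝ) T) s := by
      intro s hs
      have hzc : HasDerivWithinAt (fun u => z (T - u))
          (((mu / 2) * z (T-s) * |z (T-s)| + lam * z (T-s) + 2 * m (T-s)) * (-1)) (Icc (0:ℝ) T) s :=
        HasDerivWithinAt.comp s (((hsol (T-s) (hsub (hmem s hs))).1).mono hsub) (hσ s hs) hmem
      have hmc : HasDerivWithinAt (fun u => m (T - u))
          ((-(mu * m (T-s) * |z (T-s)|) - mu * z (T-s)) * (-1)) (Icc (0:ℝ) T) s :=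
        HasDerivWithinAt.comp s (((hsol (T-s) (hsub (hmem s hs))).2).mono hsub) (hσ s hs) hmem
      have h3 := (CMU_sq hzc).add (CMU_sq hmc)
      refine h3.congr_deriv ?_
      ring
    have hz0m0 : ∀ s ∈ Icc (0:ℝ) T, (z (T-s))^2 + (m (T-s))^2 ≤ 0 := by
      apply CMU_decay (L := 2*mu*C + mu + 2*lam + 2) hg
      · intro s hs
        have huI : T - s ∈ Ici (0:ℝ) := hsub (hmem s (Ioo_subset_Icc_self hs))
        have ha := (hbd (T-s) huI).1
        have ha0 : 0 ≤ |z (T-s)| := abs_nonneg _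
        have hz1 : z (T-s) ≤ |z (T-s)| := le_abs_self _
        have hz2 : -|z (T-s)| ≤ z (T-s) := neg_abs_le _
        nlinarith [sq_nonneg (z (T-s) + m (T-s)), sq_nonneg (z (T-s) - m (T-s)),
          sq_nonneg (z (T-s)), sq_nonneg (m (T-s)),
          mul_nonneg (mul_nonneg hmu.le ha0) (sq_nonneg (z (T-s))),
          mul_nonneg (mul_nonneg hmu.le (sub_nonneg.mpr ha)) (sq_nonneg (m (T-s))),
          mul_nonneg (mul_nonneg hmu.le ha0) (sq_nonneg (m (T-s))),
          mul_nonneg hlam.le (sq_nonneg (z (T-s))),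
          mul_nonneg hmu.le (sq_nonneg (z (T-s) + m (T-s))),
          mul_nonneg hmu.le (sq_nonneg (z (T-s) - m (T-s)))]
      · show (z (T-0))^2 + (m (T-0))^2 ≤ 0
        simp only [sub_zero, hzT, hmT]
        norm_num
    have h4 := hz0m0 T (right_mem_Icc.mpr h0T.le)
    simp only [sub_self] at h4
    nlinarith [sq_nonneg (z 0), sq_nonneg (m 0)]
  -- m is positive
  have hmpos : ∀ t ∈ Ici (0:ℝ), 0 < m t := by
    intro t ht
    rcases lt_trichotomy (m t) 0 with hneg | h0 | hpos
    · exfalso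
      have hcont : ContinuousOn m (Icc 0 t) := fun u hu =>
        (((hsol u (Icc_subset_Ici_self hu)).2).mono Icc_subset_Ici_self).continuousWithinAt
      have hIVT := intermediate_value_Icc' (ht : (0:ℝ) ≤ t) hcont
      have h0mem : (0:ℝ) ∈ Icc (m t) (m 0) := ⟨hneg.le, hm0pos.le⟩
      obtain ⟨u, hu, hmu0⟩ := hIVT h0mem
      exact hmne u (Icc_subset_Ici_self hu) hmu0
    · exact absurd h0 (hmne t ht)
    · exact hpos
  -- m ≤ 1
  have hmle : ∀ t ∈ Ici (0:ℝ), m t ≤ 1 := by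
    intro t ht
    have hbar := CMU_barrier (a := 0) (b := t) (L := 0)
      (h := fun u => m u - 1) (h' := fun u => -(mu * m u * |z u|) - mu * z u)
      (fun u hu => (((hsol u (Icc_subset_Ici_self hu)).2).mono Icc_subset_Ici_self).sub_const 1)
      ?_ (by show m 0 - 1 ≤ 0; linarith)
    · have := hbar t ⟨ht, le_rfl⟩
      linarith
    · intro u hu hge
      have hz1 : z u ≤ |z u| := le_abs_self _
      have ha0 : 0 ≤ |z u| := abs_nonneg _
      have h1 : 1 ≤ m u := by linarith
      nlinarith [mul_nonneg (mul_nonneg hmu.le (sub_nonneg.mpr h1)) ha0,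
        mul_nonneg hmu.le (by linarith [neg_abs_le (z u)] : (0:ℝ) ≤ z u + |z u|)]
  -- z is negative
  have hzneg : ∀ t ∈ Ici (0:ℝ), z t < 0 := by
    intro t₀ ht₀
    by_contra hz0
    push_neg at hz0
    have ht₀' : (0:ℝ) ≤ t₀ := ht₀
    -- z ≥ 0 on [t₀, b] for all b
    have hznn : ∀ b, ∀ u ∈ Icc t₀ b, 0 ≤ z u := by
      intro b u hu
      have hsub2 : Icc t₀ b ⊆ Ici (0:ℝ) := fun x hx => le_trans ht₀' hx.1
      have hbar := CMU_barrier (a := t₀) (b := b) (L := mu*C/2 + lam)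
        (h := fun v => -(z v)) (h' := fun v => -((mu / 2) * z v * |z v| + lam * z v + 2 * m v))
        (fun v hv => (((hsol v (hsub2 hv)).1).mono hsub2).neg) ?_ (by show -(z t₀) ≤ 0; linarith)
      · have := hbar u hu
        linarith
      · intro v hv hge2
        have hvI : v ∈ Ici (0:ℝ) := hsub2 (Ioo_subset_Icc_self hv)
        have hmv := hmpos v hvI
        have hzv : z v ≤ 0 := by linarith
        have habs : |z v| = -(z v) := abs_of_nonpos hzv
        have haC := (hbd v hvI).1
        rw [habs] at haC ⊢
        nlinarith [mul_nonneg (mul_nonneg hmu.le (neg_nonneg.mpr hzv)) (sub_nonneg.mpr haC)]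
    -- strict positivity at t₀ + 1
    have hcont : ContinuousOn z (Icc t₀ (t₀+1)) := fun u hu =>
      (((hsol u (le_trans ht₀' hu.1)).1).mono (fun x hx => le_trans ht₀' hx.1)).continuousWithinAt
    have hmono : StrictMonoOn z (Icc t₀ (t₀+1)) := by
      apply strictMonoOn_of_hasDerivWithinAt_pos (convex_Icc _ _) hcont
        (f' := fun v => (mu / 2) * z v * |z v| + lam * z v + 2 * m v)
      · intro x hx
        rw [interior_Icc] at hx
        exact ((hsol x (le_trans ht₀' hx.1.le)).1).mono
          (Set.Subset.trans interior_subset (fun y hy => le_trans ht₀' hy.1))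
      · intro x hx
        rw [interior_Icc] at hx
        have hxI : x ∈ Ici (0:ℝ) := le_trans ht₀' hx.1.le
        have hz := hznn (t₀+1) x (Ioo_subset_Icc_self hx)
        have hm := hmpos x hxI
        have habs : |z x| = z x := abs_of_nonneg hz
        rw [habs]
        nlinarith [mul_nonneg (mul_nonneg (by positivity : (0:ℝ) ≤ mu/2) hz) hz,
          mul_nonneg hlam.le hz]
    have ht₁ : 0 < z (t₀+1) := by
      have := hmono (left_mem_Icc.mpr (by linarith)) (right_mem_Icc.mpr (by linarith))
        (by linarith)
      linarith
    -- growth contradiction via shifted function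
    have hshift : ∀ u ∈ Ici (0:ℝ), HasDerivWithinAt (fun v => z (v + (t₀+1)))
        (((mu / 2) * z (u+(t₀+1)) * |z (u+(t₀+1))| + lam * z (u+(t₀+1)) + 2 * m (u+(t₀+1))) * 1)
        (Ici 0) u := by
      intro u hu
      have hu' : (0:ℝ) ≤ u := hu
      have hmem2 : ∀ x ∈ Ici (0:ℝ), x + (t₀+1) ∈ Ici (0:ℝ) := fun x hx => by
        have : (0:ℝ) ≤ x := hx
        show (0:ℝ) ≤ x + (t₀+1)
        linarith
      have hin : HasDerivWithinAt (fun v : ℝ => v + (t₀+1)) (1:ℝ) (Ici 0) u :=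
        ((hasDerivAt_id u).add_const (t₀+1)).hasDerivWithinAt
      exact HasDerivWithinAt.comp u ((hsol (u+(t₀+1)) (hmem2 u hu)).1) hin hmem2
    have hgr := CMU_growth (B := C) hlam (g := fun v => z (v + (t₀+1))) hshift ?_ ?_
    · have := hgr 0 Set.self_mem_Ici
      simp only [zero_add] at this
      linarith
    · intro u hu
      have hu' : (0:ℝ) ≤ u := hu
      have huI : (0:ℝ) ≤ u + (t₀+1) := by linarith
      have hz := hznn (u + (t₀+1)) (u + (t₀+1)) ⟨by linarith, le_rfl⟩
      have hm := hmpos (u+(t₀+1)) huI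
      have habs : |z (u+(t₀+1))| = z (u+(t₀+1)) := abs_of_nonneg hz
      show lam * z (u+(t₀+1)) ≤ ((mu / 2) * z (u+(t₀+1)) * |z (u+(t₀+1))|
        + lam * z (u+(t₀+1)) + 2 * m (u+(t₀+1))) * 1
      rw [habs]
      nlinarith [mul_nonneg (mul_nonneg (by positivity : (0:ℝ) ≤ mu/2) hz) hz]
    · intro u hu
      have hu' : (0:ℝ) ≤ u := hu
      have huI : (0:ℝ) ≤ u + (t₀+1) := by linarith
      exact (hbd (u+(t₀+1)) huI).1
  intro t ht
  exact ⟨⟨hmpos t ht, hmle t ht⟩, hzneg t ht⟩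

set_option maxHeartbeats 1000000 in
lemma CMU_unique (lam mu : ℝ) (hlam : 0 < lam) (hmu : 0 < mu) (hlow : 8*mu ≤ lam^2)
    (z₁ m₁ z₂ m₂ : ℝ → ℝ) (C₁ C₂ : ℝ)
    (hsol₁ : ∀ t ∈ Ici (0:ℝ),
      HasDerivWithinAt z₁ ((mu / 2) * z₁ t * |z₁ t| + lam * z₁ t + 2 * m₁ t) (Ici 0) t ∧
      HasDerivWithinAt m₁ (-(mu * m₁ t * |z₁ t|) - mu * z₁ t) (Ici 0) t)
    (hsol₂ : ∀ t ∈ Ici (0:ℝ),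
      HasDerivWithinAt z₂ ((mu / 2) * z₂ t * |z₂ t| + lam * z₂ t + 2 * m₂ t) (Ici 0) t ∧
      HasDerivWithinAt m₂ (-(mu * m₂ t * |z₂ t|) - mu * z₂ t) (Ici 0) t)
    (hbd₁ : ∀ t ∈ Ici (0:ℝ), |z₁ t| ≤ C₁ ∧ |m₁ t| ≤ C₁)
    (hbd₂ : ∀ t ∈ Ici (0:ℝ), |z₂ t| ≤ C₂ ∧ |m₂ t| ≤ C₂)
    (hsgn₁ : ∀ t ∈ Ici (0:ℝ), (0 < m₁ t ∧ m₁ t ≤ 1) ∧ z₁ t < 0)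
    (hsgn₂ : ∀ t ∈ Ici (0:ℝ), (0 < m₂ t ∧ m₂ t ≤ 1) ∧ z₂ t < 0)
    (hinit : m₁ 0 = m₂ 0) :
    ∀ t ∈ Ici (0:ℝ), z₁ t = z₂ t ∧ m₁ t = m₂ t := by
  have habs₁ : ∀ t ∈ Ici (0:ℝ), |z₁ t| = -(z₁ t) := fun t ht => abs_of_neg (hsgn₁ t ht).2
  have habs₂ : ∀ t ∈ Ici (0:ℝ), |z₂ t| = -(z₂ t) := fun t ht => abs_of_neg (hsgn₂ t ht).2
  -- Step A : V ≤ 0, hence z₁ 0 = z₂ 0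
  have hVle : ∀ t ∈ Ici (0:ℝ), mu * (z₁ t - z₂ t)^2 - 2 * (m₁ t - m₂ t)^2 ≤ 0 := by
    apply CMU_growth (B := (mu+2)*(C₁+C₂)^2) hlam (g' := fun t =>
      mu * (2 * (z₁ t - z₂ t) * (((mu / 2) * z₁ t * |z₁ t| + lam * z₁ t + 2 * m₁ t)
        - ((mu / 2) * z₂ t * |z₂ t| + lam * z₂ t + 2 * m₂ t)))
      - 2 * (2 * (m₁ t - m₂ t) * ((-(mu * m₁ t * |z₁ t|) - mu * z₁ t)
        - (-(mu * m₂ t * |z₂ t|) - mu * z₂ t))))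
    · intro t ht
      exact ((CMU_sq ((hsol₁ t ht).1.sub (hsol₂ t ht).1)).const_mul mu).sub
        ((CMU_sq ((hsol₁ t ht).2.sub (hsol₂ t ht).2)).const_mul 2)
    · intro t ht
      rw [habs₁ t ht, habs₂ t ht]
      have hz₁ := (hsgn₁ t ht).2
      have hz₂ := (hsgn₂ t ht).2
      have hm₁a := (hsgn₁ t ht).1.1
      have hm₁b := (hsgn₁ t ht).1.2
      have hm₂a := (hsgn₂ t ht).1.1
      have hm₂b := (hsgn₂ t ht).1.2
      have hiden : mu * (2 * (z₁ t - z₂ t) * (((mu / 2) * z₁ t * (-(z₁ t)) + lam * z₁ t + 2 * m₁ t)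
            - ((mu / 2) * z₂ t * (-(z₂ t)) + lam * z₂ t + 2 * m₂ t)))
          - 2 * (2 * (m₁ t - m₂ t) * ((-(mu * m₁ t * (-(z₁ t))) - mu * z₁ t)
            - (-(mu * m₂ t * (-(z₂ t))) - mu * z₂ t)))
          - lam * (mu * (z₁ t - z₂ t)^2 - 2 * (m₁ t - m₂ t)^2)
          = (mu*lam + mu^2*(-(z₁ t + z₂ t))) * (z₁ t - z₂ t)^2
            + (8*mu - 2*mu*(m₁ t + m₂ t)) * ((z₁ t - z₂ t) * (m₁ t - m₂ t))
            + (2*lam + 2*mu*(-(z₁ t + z₂ t))) * (m₁ t - m₂ t)^2 := by ring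
      have hquad : 0 ≤ (mu*lam + mu^2*(-(z₁ t + z₂ t))) * (z₁ t - z₂ t)^2
            + (8*mu - 2*mu*(m₁ t + m₂ t)) * ((z₁ t - z₂ t) * (m₁ t - m₂ t))
            + (2*lam + 2*mu*(-(z₁ t + z₂ t))) * (m₁ t - m₂ t)^2 := by
        apply CMU_quad_nonneg
        · have : 0 < -(z₁ t + z₂ t) := by linarith
          positivity
        · have hP : 0 < -(z₁ t + z₂ t) := by linarith
          have hs0 : 0 < m₁ t + m₂ t := by linarith
          have hs2 : m₁ t + m₂ t ≤ 2 := by linarith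
          have h1 : (8*mu - 2*mu*(m₁ t + m₂ t))^2 ≤ 64*mu^2 := by
            nlinarith [mul_nonneg (mul_nonneg (mul_nonneg hmu.le hmu.le) hs0.le)
              (show (0:ℝ) ≤ 8 - (m₁ t + m₂ t) by linarith)]
          have h2 : 64*mu^2 ≤ 8*mu*lam^2 := by nlinarith [mul_pos hmu hmu]
          have h3 : 8*mu*lam^2 ≤ 4 * (mu*lam + mu^2*(-(z₁ t + z₂ t)))
              * (2*lam + 2*mu*(-(z₁ t + z₂ t))) := by
            nlinarith [mul_pos (mul_pos hmu hlam) (mul_pos hmu hP),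
              mul_pos (mul_pos (mul_pos hmu hmu) hP) (mul_pos hmu hP),
              mul_pos (mul_pos (mul_pos hmu hmu) hP) hlam]
          linarith
      linarith [hiden ▸ hquad]
    · intro t ht
      have hw : |z₁ t - z₂ t| ≤ C₁ + C₂ := by
        calc |z₁ t - z₂ t| ≤ |z₁ t| + |z₂ t| := abs_sub _ _
          _ ≤ C₁ + C₂ := add_le_add (hbd₁ t ht).1 (hbd₂ t ht).1
      have hn : |m₁ t - m₂ t| ≤ C₁ + C₂ := by
        calc |m₁ t - m₂ t| ≤ |m₁ t| + |m₂ t| := abs_sub _ _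
          _ ≤ C₁ + C₂ := add_le_add (hbd₁ t ht).2 (hbd₂ t ht).2
      have hw2 : (z₁ t - z₂ t)^2 ≤ (C₁+C₂)^2 := by
        nlinarith [abs_nonneg (z₁ t - z₂ t), sq_abs (z₁ t - z₂ t)]
      have hn2 : (m₁ t - m₂ t)^2 ≤ (C₁+C₂)^2 := by
        nlinarith [abs_nonneg (m₁ t - m₂ t), sq_abs (m₁ t - m₂ t)]
      rw [abs_le]
      constructor <;> nlinarith [sq_nonneg (z₁ t - z₂ t), sq_nonneg (m₁ t - m₂ t)]
  have hz0 : z₁ 0 = z₂ 0 := by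
    have h1 := hVle 0 Set.self_mem_Ici
    rw [hinit] at h1
    have h2 : (z₁ 0 - z₂ 0)^2 = 0 := by
      have := sq_nonneg (z₁ 0 - z₂ 0)
      nlinarith
    have := (pow_eq_zero_iff two_ne_zero).mp h2
    linarith
  -- Step B : forward Gronwall
  intro t ht
  have hsubt : Icc (0:ℝ) t ⊆ Ici 0 := Icc_subset_Ici_self
  have hg : ∀ u ∈ Icc (0:ℝ) t, (z₁ u - z₂ u)^2 + (m₁ u - m₂ u)^2 ≤ 0 := by
    apply CMU_decay (L := 2*lam + mu*(C₁+C₂) + 2 + mu) (g' := fun u =>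
      2 * (z₁ u - z₂ u) * (((mu / 2) * z₁ u * |z₁ u| + lam * z₁ u + 2 * m₁ u)
        - ((mu / 2) * z₂ u * |z₂ u| + lam * z₂ u + 2 * m₂ u))
      + 2 * (m₁ u - m₂ u) * ((-(mu * m₁ u * |z₁ u|) - mu * z₁ u)
        - (-(mu * m₂ u * |z₂ u|) - mu * z₂ u)))
    · intro u hu
      exact (CMU_sq (((hsol₁ u (hsubt hu)).1.mono hsubt).sub ((hsol₂ u (hsubt hu)).1.mono hsubt))).add
        (CMU_sq (((hsol₁ u (hsubt hu)).2.mono hsubt).sub ((hsol₂ u (hsubt hu)).2.mono hsubt)))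
    · intro u hu
      have huI : u ∈ Ici (0:ℝ) := hsubt (Ioo_subset_Icc_self hu)
      rw [habs₁ u huI, habs₂ u huI]
      have hz₁ := (hsgn₁ u huI).2
      have hz₂ := (hsgn₂ u huI).2
      have hm₁a := (hsgn₁ u huI).1.1
      have hm₁b := (hsgn₁ u huI).1.2
      have hm₂a := (hsgn₂ u huI).1.1
      have hm₂b := (hsgn₂ u huI).1.2
      have hzb₁ : -(z₁ u) ≤ C₁ := by
        have := (hbd₁ u huI).1; rw [habs₁ u huI] at this; linarith
      have hzb₂ : -(z₂ u) ≤ C₂ := by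
        have := (hbd₂ u huI).1; rw [habs₂ u huI] at this; linarith
      have key := CMU_gb mu lam (C₁+C₂) (z₁ u + z₂ u) (m₁ u + m₂ u)
        (z₁ u - z₂ u) (m₁ u - m₂ u) hmu hlam (by linarith) (by linarith)
        (by linarith) (by linarith)
      exact le_trans (le_of_eq (by ring)) key
    · show (z₁ 0 - z₂ 0)^2 + (m₁ 0 - m₂ 0)^2 ≤ 0
      rw [hz0, hinit]
      norm_num
  have h4 := hg t ⟨ht, le_rfl⟩
  constructor
  · have : (z₁ t - z₂ t)^2 = 0 := le_antisymm (by nlinarith [sq_nonneg (m₁ t - m₂ t)]) (sq_nonneg _)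
    have := (pow_eq_zero_iff two_ne_zero).mp this
    linarith
  · have : (m₁ t - m₂ t)^2 = 0 := le_antisymm (by nlinarith [sq_nonneg (z₁ t - z₂ t)]) (sq_nonneg _)
    have := (pow_eq_zero_iff two_ne_zero).mp this
    linarith

/-- negation of a solution is a solution -/
lemma CMU_neg_sol {lam mu : ℝ} {z m : ℝ → ℝ}
    (hsol : ∀ t ∈ Ici (0:ℝ),
      HasDerivWithinAt z ((mu / 2) * z t * |z t| + lam * z t + 2 * m t) (Ici 0) t ∧
      HasDerivWithinAt m (-(mu * m t * |z t|) - mu * z t) (Ici 0) t) :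
    ∀ t ∈ Ici (0:ℝ),
      HasDerivWithinAt (fun u => -(z u))
        ((mu / 2) * (-(z t)) * |(-(z t))| + lam * (-(z t)) + 2 * (-(m t))) (Ici 0) t ∧
      HasDerivWithinAt (fun u => -(m u))
        (-(mu * (-(m t)) * |(-(z t))|) - mu * (-(z t))) (Ici 0) t := by
  intro t ht
  constructor
  · have := (hsol t ht).1.neg
    refine this.congr_deriv ?_
    rw [abs_neg]; ring
  · have := (hsol t ht).2.neg
    refine this.congr_deriv ?_
    rw [abs_neg]; ring

/-- Low mobility regime `0 < μ ≤ λ²/8`: for `m₀ ∈ [−1,1]`, `m₀ ≠ 0`, any two bounded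
solutions of the constant-mobility system on `[0,∞)` with the same initial mean
`m(0) = m₀` coincide; the bounded solution with prescribed initial mean is unique. -/
theorem constant_mobility_low_mobility_bounded_solution_unique
    (lam mu m₀ : ℝ) (hlam : 0 < lam) (hmu : 0 < mu) (hlow : mu ≤ lam ^ 2 / 8)
    (hm₀ : m₀ ∈ Set.Icc (-1 : ℝ) 1) (hm₀ne : m₀ ≠ 0)
    (z₁ m₁ z₂ m₂ : ℝ → ℝ)
    (hsol₁ : ∀ t ∈ Set.Ici (0 : ℝ),
      HasDerivWithinAt z₁ ((mu / 2) * z₁ t * |z₁ t| + lam * z₁ t + 2 * m₁ t) (Set.Ici 0) t ∧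
      HasDerivWithinAt m₁ (-(mu * m₁ t * |z₁ t|) - mu * z₁ t) (Set.Ici 0) t)
    (hsol₂ : ∀ t ∈ Set.Ici (0 : ℝ),
      HasDerivWithinAt z₂ ((mu / 2) * z₂ t * |z₂ t| + lam * z₂ t + 2 * m₂ t) (Set.Ici 0) t ∧
      HasDerivWithinAt m₂ (-(mu * m₂ t * |z₂ t|) - mu * z₂ t) (Set.Ici 0) t)
    (hbd₁ : ∃ C : ℝ, ∀ t ∈ Set.Ici (0 : ℝ), |z₁ t| ≤ C ∧ |m₁ t| ≤ C)
    (hbd₂ : ∃ C : ℝ, ∀ t ∈ Set.Ici (0 : ℝ), |z₂ t| ≤ C ∧ |m₂ t| ≤ C)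
    (hinit₁ : m₁ 0 = m₀) (hinit₂ : m₂ 0 = m₀) :
    ∀ t ∈ Set.Ici (0 : ℝ), z₁ t = z₂ t ∧ m₁ t = m₂ t := by
  obtain ⟨C₁, hC₁⟩ := hbd₁
  obtain ⟨C₂, hC₂⟩ := hbd₂
  have hlow' : 8*mu ≤ lam^2 := by linarith
  rcases hm₀ne.lt_or_gt with hneg | hpos
  · -- m₀ < 0 : apply the positive case to the negated solutions
    have hsol₁' := CMU_neg_sol hsol₁
    have hsol₂' := CMU_neg_sol hsol₂
    have hbd₁' : ∀ t ∈ Ici (0:ℝ), |(fun u => -(z₁ u)) t| ≤ C₁ ∧ |(fun u => -(m₁ u)) t| ≤ C₁ := by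
      intro t ht
      constructor
      · show |(-(z₁ t))| ≤ C₁; rw [abs_neg]; exact (hC₁ t ht).1
      · show |(-(m₁ t))| ≤ C₁; rw [abs_neg]; exact (hC₁ t ht).2
    have hbd₂' : ∀ t ∈ Ici (0:ℝ), |(fun u => -(z₂ u)) t| ≤ C₂ ∧ |(fun u => -(m₂ u)) t| ≤ C₂ := by
      intro t ht
      constructor
      · show |(-(z₂ t))| ≤ C₂; rw [abs_neg]; exact (hC₂ t ht).1
      · show |(-(m₂ t))| ≤ C₂; rw [abs_neg]; exact (hC₂ t ht).2
    have hsgn₁ := CMU_signs lam mu hlam hmu hlow' _ _ C₁ hsol₁' hbd₁'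
      (by show (0:ℝ) < -(m₁ 0); rw [hinit₁]; linarith)
      (by show -(m₁ 0) ≤ 1; rw [hinit₁]; linarith [hm₀.1])
    have hsgn₂ := CMU_signs lam mu hlam hmu hlow' _ _ C₂ hsol₂' hbd₂'
      (by show (0:ℝ) < -(m₂ 0); rw [hinit₂]; linarith)
      (by show -(m₂ 0) ≤ 1; rw [hinit₂]; linarith [hm₀.1])
    have huniq := CMU_unique lam mu hlam hmu hlow' _ _ _ _ C₁ C₂
      hsol₁' hsol₂' hbd₁' hbd₂' hsgn₁ hsgn₂
      (by show -(m₁ 0) = -(m₂ 0); rw [hinit₁, hinit₂])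
    intro t ht
    obtain ⟨h1, h2⟩ := huniq t ht
    constructor <;> linarith [neg_inj.mp h1, neg_inj.mp h2]
  · -- m₀ > 0
    have hsgn₁ := CMU_signs lam mu hlam hmu hlow' _ _ C₁ hsol₁ hC₁
      (by rw [hinit₁]; exact hpos) (by rw [hinit₁]; exact hm₀.2)
    have hsgn₂ := CMU_signs lam mu hlam hmu hlow' _ _ C₂ hsol₂ hC₂
      (by rw [hinit₂]; exact hpos) (by rw [hinit₂]; exact hm₀.2)
    exact CMU_unique lam mu hlam hmu hlow' _ _ _ _ C₁ C₂
      hsol₁ hsol₂ hC₁ hC₂ hsgn₁ hsgn₂ (by rw [hinit₁, hinit₂])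
end

section
/- Let λ > 0, 0 < μ ≤ λ²/8 (low mobility regime), and m₀ ∈ (−1, 0). The unique bounded solution (z, m) of the constant-mobility system on [0,∞) with m(0) = m₀ satisfies z(t) > 0 for all t ≥ 0 and m is strictly decreasing on [0,∞), with m(t) → −1 as t → ∞. -/
/-!
Along a solution `m' = -μ z (m + 1)` wherever `z ≥ 0`, and an exponential barrier keeps
`m > -1`. If `z` ever became nonpositive, it would first do so at a time where already `m < 0`.
From there on the solution is trapped in the wedge `z ≤ 0, m + λz/4 < 0`: on its boundary the
field points inwards because `μ ≤ λ²/8`. Inside the wedge `z' < λz/2`, so `z` would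
decrease without bound, contradicting boundedness. Hence `z > 0`, and `m` is strictly
decreasing. Since then `m ≤ m₀ < 0`, a solution entering the strip `0 < z ≤ ε` (for `ε` small)
would be driven through `z = 0`; so `z ≥ ε`, and Grönwall gives `m + 1 ≤ (m₀ + 1) e^{-μεt}`.
-/

open Set Filter Topology Real

theorem HasDerivWithinAt.eventually_le_of_eq_imp_neg {f : ℝ → ℝ} {f' x c : ℝ}
    (hf : HasDerivWithinAt f f' (Ici x) x) (hle : f x ≤ c) (hneg : f x = c → f' < 0) :
    ∀ᶠ t in 𝓝[>] x, f t ≤ c := by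
  rcases hle.lt_or_eq with hlt | heq
  · exact ((hf.continuousWithinAt.mono Ioi_subset_Ici_self).eventually
      (gt_mem_nhds hlt)).mono fun _ ↦ le_of_lt
  · have hslope : Tendsto (slope f x) (𝓝[>] x) (𝓝 f') :=
      (hasDerivWithinAt_iff_tendsto_slope' (lt_irrefl x)).mp hf.Ioi_of_Ici
    filter_upwards [hslope.eventually (gt_mem_nhds (hneg heq)), self_mem_nhdsWithin]
      with t hslope_neg (hxt : x < t)
    rw [slope_def_field, div_neg_iff] at hslope_neg
    rcases hslope_neg with h | h <;> linarith [h.1, h.2]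

theorem nonpos_of_hasDerivWithinAt_of_eq_zero_imp_neg {f g f' g' : ℝ → ℝ} {a : ℝ}
    (hf : ∀ x ∈ Ici a, HasDerivWithinAt f (f' x) (Ici a) x)
    (hg : ∀ x ∈ Ici a, HasDerivWithinAt g (g' x) (Ici a) x) (hfa : f a ≤ 0) (hga : g a ≤ 0)
    (hf' : ∀ x ∈ Ici a, f x = 0 → g x ≤ 0 → f' x < 0)
    (hg' : ∀ x ∈ Ici a, g x = 0 → f x ≤ 0 → g' x < 0) :
    ∀ x ∈ Ici a, f x ≤ 0 ∧ g x ≤ 0 := by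
  intro b hb
  set s := {x | f x ≤ 0 ∧ g x ≤ 0}
  have hclosed : IsClosed (s ∩ Icc a b) := by
    have hfc : ContinuousOn f (Icc a b) := fun x hx ↦
      (hf x hx.1).continuousWithinAt.mono Icc_subset_Ici_self
    have hgc : ContinuousOn g (Icc a b) := fun x hx ↦
      (hg x hx.1).continuousWithinAt.mono Icc_subset_Ici_self
    rw [inter_comm]
    exact (hfc.prodMk hgc).preimage_isClosed_of_isClosed isClosed_Icc
      (isClosed_Iic.prod isClosed_Iic)
  refine hclosed.Icc_subset_of_forall_mem_nhdsWithin ⟨hfa, hga⟩ (fun x ⟨⟨hfx, hgx⟩, hx, _⟩ ↦ ?_)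
    ⟨hb, le_rfl⟩
  have hsub : Ici x ⊆ Ici a := Ici_subset_Ici.2 hx
  exact ((hf x hx).mono hsub |>.eventually_le_of_eq_imp_neg hfx (hf' x hx · hgx)).and
    ((hg x hx).mono hsub |>.eventually_le_of_eq_imp_neg hgx (hg' x hx · hfx))

theorem strictAntiOn_Ici_of_hasDerivWithinAt_neg {f f' : ℝ → ℝ} {a : ℝ}
    (hf : ∀ x ∈ Ici a, HasDerivWithinAt f (f' x) (Ici a) x) (hf' : ∀ x ∈ Ioi a, f' x < 0) :
    StrictAntiOn f (Ici a) :=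
  strictAntiOn_of_hasDerivWithinAt_neg (convex_Ici a) (fun x hx ↦ (hf x hx).continuousWithinAt)
    (fun x hx ↦ by
      rw [interior_Ici] at hx ⊢
      exact (hf x (mem_Ici_of_Ioi hx)).mono Ioi_subset_Ici_self)
    (by simpa only [interior_Ici] using hf')

theorem not_bddBelow_image_of_hasDerivWithinAt_le_neg {f f' : ℝ → ℝ} {a δ : ℝ} (hδ : 0 < δ)
    (hf : ∀ x ∈ Ici a, HasDerivWithinAt f (f' x) (Ici a) x) (hf' : ∀ x ∈ Ici a, f' x ≤ -δ) :
    ¬BddBelow (f '' Ici a) := by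
  rintro ⟨M, hM⟩
  set b := a + (|f a - M| + 1) / δ
  have hab : a ≤ b := le_add_of_nonneg_right (by positivity)
  have hB : ∀ x, HasDerivAt (fun t ↦ f a - δ * (t - a)) (-δ) x := fun x ↦
    ((((hasDerivAt_id' x).sub_const a).const_mul δ).const_sub (f a)).congr_deriv (by ring)
  have hlin := image_le_of_deriv_right_le_deriv_boundary (a := a) (b := b) (B' := fun _ ↦ -δ)
    (fun x hx ↦ (hf x hx.1).continuousWithinAt.mono Icc_subset_Ici_self)
    (fun x hx ↦ (hf x hx.1).mono (Ici_subset_Ici.2 hx.1)) (by simp) (by fun_prop)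
    (fun x _ ↦ (hB x).hasDerivWithinAt) (fun x hx ↦ hf' x hx.1) ⟨hab, le_rfl⟩
  have hfb := hM ⟨b, hab, rfl⟩
  have hδb : δ * (b - a) = |f a - M| + 1 := by simp only [b]; field_simp; ring
  linarith [le_abs_self (f a - M)]

namespace ConstantMobility

noncomputable def zDot (lam mu z m : ℝ) : ℝ := mu / 2 * z * |z| + lam * z + 2 * m

def mDot (mu z m : ℝ) : ℝ := -(mu * m * |z|) - mu * z

section VectorField

variable {lam mu z z' m m' C : ℝ}

@[simp]
theorem zDot_zero : zDot lam mu 0 m = 2 * m := by simp [zDot]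

theorem mDot_of_nonneg (hz : 0 ≤ z) : mDot mu z m = -(mu * z * (m + 1)) := by
  rw [mDot, abs_of_nonneg hz]; ring

theorem neg_mul_le_mDot (hmu : 0 ≤ mu) (hzC : |z| ≤ C) (hm : 0 ≤ m + 1) :
    -(mu * C * (m + 1)) ≤ mDot mu z m := by
  have hsplit : mDot mu z m = -(mu * |z| * (m + 1)) + mu * (|z| - z) := by rw [mDot]; ring
  rw [hsplit]
  nlinarith [mul_le_mul_of_nonneg_right (mul_le_mul_of_nonneg_left hzC hmu) hm,
    mul_nonneg hmu (sub_nonneg.2 (le_abs_self z))]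

theorem zDot_mono (hlam : 0 ≤ lam) (hmu : 0 ≤ mu) (hz : 0 ≤ z) (hzz : z ≤ z') (hmm : m ≤ m') :
    zDot lam mu z m ≤ zDot lam mu z' m' := by
  have hz' : 0 ≤ z' := hz.trans hzz
  have : 0 ≤ mu / 2 * z' := by positivity
  simp only [zDot, abs_of_nonneg hz, abs_of_nonneg hz']
  gcongr

theorem exists_pos_zDot_neg (hm : m < 0) : ∃ ε > 0, zDot lam mu ε m < 0 := by
  have hcont : Continuous fun ε ↦ zDot lam mu ε m := by unfold zDot; fun_prop
  have h0 : zDot lam mu 0 m < 0 := by rw [zDot_zero]; linarith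
  have hev : ∀ᶠ ε in 𝓝[>] (0 : ℝ), zDot lam mu ε m < 0 :=
    nhdsWithin_le_nhds ((hcont.tendsto 0).eventually (gt_mem_nhds h0))
  obtain ⟨ε, hε, hε0⟩ := (hev.and self_mem_nhdsWithin).exists
  exact ⟨ε, hε0, hε⟩

theorem zDot_lt_of_mem_wedge (hmu : 0 ≤ mu) (hz : z ≤ 0) (hu : m + lam / 4 * z < 0) :
    zDot lam mu z m < lam / 2 * z := by
  rw [zDot, abs_of_nonpos hz]
  nlinarith [mul_nonneg hmu (sq_nonneg z)]

theorem wedge_barrier_deriv_neg (hlam : 0 < lam) (hmu : 0 ≤ mu) (hlow : mu ≤ lam ^ 2 / 8)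
    (hz : z ≤ 0) (hzC : -C ≤ z) (hu : m + lam / 4 * z < 0) :
    mDot mu z m + lam / 4 * zDot lam mu z m + mu * C * (m + lam / 4 * z) < 0 := by
  have key : mDot mu z m + lam / 4 * zDot lam mu z m + mu * C * (m + lam / 4 * z) =
      (m + lam / 4 * z) * (mu * (z + C) + lam / 2) + (lam ^ 2 / 8 - mu) * z
        - 3 * lam * mu / 8 * z ^ 2 := by
    rw [mDot, zDot, abs_of_nonpos hz]; ring
  have h1 : (m + lam / 4 * z) * (mu * (z + C) + lam / 2) < 0 :=
    mul_neg_of_neg_of_pos hu (by nlinarith)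
  have h2 : (lam ^ 2 / 8 - mu) * z ≤ 0 := mul_nonpos_of_nonneg_of_nonpos (by linarith) hz
  have h3 : 0 ≤ 3 * lam * mu / 8 * z ^ 2 := by positivity
  linarith

end VectorField

def IsSolution (lam mu : ℝ) (z m : ℝ → ℝ) : Prop :=
  ∀ t ∈ Ici (0 : ℝ), HasDerivWithinAt z (zDot lam mu (z t) (m t)) (Ici 0) t ∧
    HasDerivWithinAt m (mDot mu (z t) (m t)) (Ici 0) t

namespace IsSolution

variable {lam mu C a t : ℝ} {z m : ℝ → ℝ}

theorem hasDerivWithinAt_z (h : IsSolution lam mu z m) (ha : 0 ≤ a) (ht : t ∈ Ici a) :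
    HasDerivWithinAt z (zDot lam mu (z t) (m t)) (Ici a) t :=
  (h t (ha.trans ht)).1.mono (Ici_subset_Ici.2 ha)

theorem hasDerivWithinAt_m (h : IsSolution lam mu z m) (ha : 0 ≤ a) (ht : t ∈ Ici a) :
    HasDerivWithinAt m (mDot mu (z t) (m t)) (Ici a) t :=
  (h t (ha.trans ht)).2.mono (Ici_subset_Ici.2 ha)

theorem continuousOn_z (h : IsSolution lam mu z m) : ContinuousOn z (Ici 0) :=
  fun t ht ↦ (h t ht).1.continuousWithinAt

theorem continuousOn_m (h : IsSolution lam mu z m) : ContinuousOn m (Ici 0) :=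
  fun t ht ↦ (h t ht).2.continuousWithinAt

theorem neg_one_lt_m (h : IsSolution lam mu z m) (hmu : 0 ≤ mu)
    (hC : ∀ t ∈ Ici 0, |z t| ≤ C) (h0 : -1 < m 0) : ∀ t ∈ Ici 0, -1 < m t := by
  intro t ht
  set K := mu * C + 1
  have hB : ∀ x, HasDerivAt (fun s ↦ 1 - (m 0 + 1) * exp (-K * s))
      ((m 0 + 1) * K * exp (-K * x)) x := fun x ↦
    ((((hasDerivAt_id' x).const_mul (-K)).exp.const_mul _).const_sub 1).congr_deriv (by ring)
  have hbarrier := image_le_of_deriv_right_lt_deriv_boundary (a := 0) (b := t)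
    (f := fun s ↦ -m s) ((h.continuousOn_m.mono Icc_subset_Ici_self).neg)
    (fun x hx ↦ (h.hasDerivWithinAt_m hx.1 self_mem_Ici).neg) (by simp) hB
    (fun x hx hxB ↦ by
      have hm1 : m x + 1 = (m 0 + 1) * exp (-K * x) := by linarith [show -m x = _ from hxB]
      have hpos : 0 < m x + 1 := hm1 ▸ mul_pos (by linarith) (exp_pos _)
      have hK : (m 0 + 1) * K * exp (-K * x) = mu * C * (m x + 1) + (m x + 1) := by
        rw [mul_right_comm, ← hm1]; ring
      linarith [neg_mul_le_mDot hmu (hC x hx.1) hpos.le]) ⟨ht, le_rfl⟩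
  have : 0 < (m 0 + 1) * exp (-K * t) := mul_pos (by linarith) (exp_pos _)
  linarith [show -m t ≤ 1 - (m 0 + 1) * exp (-K * t) from hbarrier]

theorem m_le_of_z_nonneg (h : IsSolution lam mu z m) (hmu : 0 ≤ mu) {b : ℝ} (ha : 0 ≤ a)
    (hab : a ≤ b) (hz : ∀ t ∈ Ico a b, 0 ≤ z t) (hm : ∀ t ∈ Ico a b, -1 ≤ m t) : m b ≤ m a :=
  image_le_of_deriv_right_le_deriv_boundary (B := fun _ ↦ m a) (B' := fun _ ↦ 0)
    ((h.continuousOn_m.mono (Icc_subset_Ici_iff hab |>.2 ha)))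
    (fun x hx ↦ h.hasDerivWithinAt_m (ha.trans hx.1) self_mem_Ici) le_rfl continuousOn_const
    (fun _ _ ↦ hasDerivWithinAt_const _ _ _)
    (fun x hx ↦ by
      rw [mDot_of_nonneg (hz x hx)]
      nlinarith [mul_nonneg (mul_nonneg hmu (hz x hx)) (neg_le_iff_add_nonneg.1 (hm x hx))])
    ⟨hab, le_rfl⟩

theorem exists_z_nonpos_m_neg (h : IsSolution lam mu z m) (hmu : 0 ≤ mu)
    (hm : ∀ t ∈ Ici 0, -1 < m t) (h0 : m 0 < 0) {t₀ : ℝ} (ht₀ : 0 ≤ t₀) (hzt₀ : z t₀ ≤ 0) :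
    ∃ τ, 0 ≤ τ ∧ z τ ≤ 0 ∧ m τ < 0 := by
  have hclosed : IsClosed (Icc 0 t₀ ∩ z ⁻¹' Iic 0) :=
    (h.continuousOn_z.mono Icc_subset_Ici_self).preimage_isClosed_of_isClosed isClosed_Icc
      isClosed_Iic
  obtain ⟨τ, ⟨⟨hτ, hτt₀⟩, hzτ⟩, hfirst⟩ := (isCompact_Icc.of_isClosed_subset hclosed
    inter_subset_left).exists_isLeast ⟨t₀, ⟨ht₀, le_rfl⟩, hzt₀⟩
  have hz : ∀ t ∈ Ico 0 τ, 0 ≤ z t := fun t ht ↦ by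
    by_contra! hzt
    exact (hfirst ⟨⟨ht.1, ht.2.le.trans hτt₀⟩, hzt.le⟩).not_gt ht.2
  exact ⟨τ, hτ, hzτ, (h.m_le_of_z_nonneg hmu le_rfl hτ hz fun t ht ↦ (hm t ht.1).le).trans_lt h0⟩

theorem wedge_invariant (h : IsSolution lam mu z m) (hlam : 0 < lam) (hmu : 0 ≤ mu)
    (hlow : mu ≤ lam ^ 2 / 8) (hC : ∀ t ∈ Ici 0, |z t| ≤ C) {τ : ℝ} (hτ : 0 ≤ τ)
    (hzτ : z τ ≤ 0) (huτ : m τ + lam / 4 * z τ < 0) :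
    ∀ t ∈ Ici τ, z t ≤ 0 ∧ m t + lam / 4 * z t < 0 := by
  set u := fun t ↦ m t + lam / 4 * z t
  -- an exponentially decaying barrier makes the boundary of the wedge strictly repelling
  set B := fun t ↦ u τ * exp (-(mu * C) * (t - τ))
  have hB : ∀ t, B t < 0 := fun t ↦ mul_neg_of_neg_of_pos huτ (exp_pos _)
  have hB' : ∀ t, HasDerivAt B (-(mu * C) * B t) t := fun t ↦
    ((((hasDerivAt_id' t).sub_const τ).const_mul (-(mu * C))).exp.const_mul (u τ)).congr_deriv
      (by simp only [B]; ring)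
  have hquad := nonpos_of_hasDerivWithinAt_of_eq_zero_imp_neg (f := z) (g := fun t ↦ u t - B t)
    (fun x hx ↦ h.hasDerivWithinAt_z hτ hx)
    (fun x hx ↦ ((h.hasDerivWithinAt_m hτ hx).add
      ((h.hasDerivWithinAt_z hτ hx).const_mul (lam / 4))).sub (hB' x).hasDerivWithinAt)
    hzτ (by simp [B])
    (fun x _ hzx hgx ↦ by
      have hmx : m x < 0 := by simpa [u, hzx] using show u x < 0 by linarith [hB x]
      rw [hzx, zDot_zero]
      linarith)
    (fun x hx hgx hzx ↦ by
      have hw := wedge_barrier_deriv_neg hlam hmu hlow hzx (neg_le_of_abs_le (hC x (hτ.trans hx)))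
        (show u x < 0 by linarith [hB x])
      simp only [show B x = u x by linarith, u] at hw ⊢
      linarith)
  exact fun t ht ↦ ⟨(hquad t ht).1, show u t < 0 by linarith [(hquad t ht).2, hB t]⟩

theorem z_pos (h : IsSolution lam mu z m) (hlam : 0 < lam) (hmu : 0 ≤ mu)
    (hlow : mu ≤ lam ^ 2 / 8) (hC : ∀ t ∈ Ici 0, |z t| ≤ C) (hm : ∀ t ∈ Ici 0, -1 < m t)
    (h0 : m 0 < 0) : ∀ t ∈ Ici 0, 0 < z t := by
  intro t₀ ht₀
  by_contra! hzt₀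
  obtain ⟨τ, hτ, hzτ, hmτ⟩ := h.exists_z_nonpos_m_neg hmu hm h0 ht₀ hzt₀
  have hwedge := h.wedge_invariant hlam hmu hlow hC hτ hzτ (by nlinarith)
  have hzDot : ∀ x ∈ Ici τ, zDot lam mu (z x) (m x) < lam / 2 * z x := fun x hx ↦
    zDot_lt_of_mem_wedge hmu (hwedge x hx).1 (hwedge x hx).2
  have hanti : StrictAntiOn z (Ici τ) :=
    strictAntiOn_Ici_of_hasDerivWithinAt_neg (fun x hx ↦ h.hasDerivWithinAt_z hτ hx)
      fun x hx ↦ by nlinarith [hzDot x (mem_Ici_of_Ioi hx), (hwedge x (mem_Ici_of_Ioi hx)).1]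
  set t₁ := τ + 1
  have ht₁ : τ ≤ t₁ := by linarith
  have hzt₁ : z t₁ < 0 := (hanti self_mem_Ici ht₁ (lt_add_one τ)).trans_le hzτ
  refine not_bddBelow_image_of_hasDerivWithinAt_le_neg (a := t₁) (δ := -(lam / 2 * z t₁))
    (by nlinarith) (fun x hx ↦ h.hasDerivWithinAt_z (hτ.trans ht₁) hx) (fun x hx ↦ ?_)
    ⟨-C, ?_⟩
  · have hzx : z x ≤ z t₁ := hanti.antitoneOn ht₁ (ht₁.trans hx) hx
    nlinarith [hzDot x (ht₁.trans hx)]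
  · rintro _ ⟨x, hx, rfl⟩
    exact neg_le_of_abs_le (hC x (hτ.trans (ht₁.trans hx)))

theorem m_strictAntiOn (h : IsSolution lam mu z m) (hmu : 0 < mu) (hz : ∀ t ∈ Ici 0, 0 < z t)
    (hm : ∀ t ∈ Ici 0, -1 < m t) : StrictAntiOn m (Ici 0) :=
  strictAntiOn_Ici_of_hasDerivWithinAt_neg (fun x hx ↦ h.hasDerivWithinAt_m le_rfl hx)
    fun x hx ↦ by
      have hx' := mem_Ici_of_Ioi hx
      rw [mDot_of_nonneg (hz x hx').le, neg_lt_zero]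
      exact mul_pos (mul_pos hmu (hz x hx')) (by linarith [hm x hx'])

theorem exists_pos_le_z (h : IsSolution lam mu z m) (hlam : 0 ≤ lam) (hmu : 0 ≤ mu)
    (hz : ∀ t ∈ Ici 0, 0 < z t) (hm : ∀ t ∈ Ici 0, m t ≤ m 0) (h0 : m 0 < 0) :
    ∃ ε > 0, ∀ t ∈ Ici 0, ε ≤ z t := by
  obtain ⟨ε, hε, hδ⟩ := exists_pos_zDot_neg (lam := lam) (mu := mu) h0
  refine ⟨ε, hε, fun t₀ ht₀ ↦ ?_⟩
  by_contra! hzt₀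
  have hbelow : ∀ t ∈ Ici t₀, z t ≤ ε := fun t ht ↦
    image_le_of_deriv_right_lt_deriv_boundary (B := fun _ ↦ ε) (B' := fun _ ↦ 0)
      (h.continuousOn_z.mono fun x hx ↦ mem_Ici.2 (ht₀.trans hx.1))
      (fun x hx ↦ h.hasDerivWithinAt_z (ht₀.trans hx.1) self_mem_Ici) hzt₀.le
      (fun _ ↦ hasDerivAt_const _ _)
      (fun x hx hzx ↦ by
        rw [hzx]
        exact (zDot_mono hlam hmu hε.le le_rfl (hm x (ht₀.trans hx.1))).trans_lt hδ)
      ⟨ht, le_rfl⟩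
  refine not_bddBelow_image_of_hasDerivWithinAt_le_neg (neg_pos.2 hδ)
    (fun x hx ↦ h.hasDerivWithinAt_z ht₀ hx) (fun x hx ↦ ?_) ⟨0, ?_⟩
  · rw [neg_neg]
    have hx0 := Ici_subset_Ici.2 ht₀ hx
    exact zDot_mono hlam hmu (hz x hx0).le (hbelow x hx) (hm x hx0)
  · rintro _ ⟨x, hx, rfl⟩
    exact (hz x (Ici_subset_Ici.2 ht₀ hx)).le

theorem m_add_one_le (h : IsSolution lam mu z m) (hmu : 0 ≤ mu) {ε : ℝ} (hε : 0 ≤ ε)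
    (hzε : ∀ t ∈ Ici 0, ε ≤ z t) (hm : ∀ t ∈ Ici 0, -1 < m t) :
    ∀ t ∈ Ici 0, m t + 1 ≤ (m 0 + 1) * exp (-(mu * ε) * t) := by
  intro t ht
  have hgronwall := le_gronwallBound_of_liminf_deriv_right_le (f := fun s ↦ m s + 1)
    (f' := fun s ↦ mDot mu (z s) (m s)) (K := -(mu * ε)) (ε := 0)
    (fun x hx ↦ ((h.continuousOn_m x hx.1).mono Icc_subset_Ici_self).add continuousWithinAt_const)
    (fun x hx _ hr ↦
      ((h.hasDerivWithinAt_m hx.1 self_mem_Ici).add_const 1).liminf_right_slope_le hr)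
    le_rfl
    (fun x hx ↦ by
      have hzx := hzε x hx.1
      rw [mDot_of_nonneg (hε.trans hzx)]
      nlinarith [mul_le_mul_of_nonneg_left hzx hmu, hm x hx.1])
    t ⟨ht, le_rfl⟩
  simpa [gronwallBound_ε0] using hgronwall

theorem tendsto_m (h : IsSolution lam mu z m) (hmu : 0 < mu) {ε : ℝ} (hε : 0 < ε)
    (hzε : ∀ t ∈ Ici 0, ε ≤ z t) (hm : ∀ t ∈ Ici 0, -1 < m t) :
    Tendsto m atTop (𝓝 (-1)) := by
  have hexp : Tendsto (fun t ↦ exp (-(mu * ε) * t)) atTop (𝓝 0) :=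
    tendsto_exp_atBot.comp (tendsto_id.const_mul_atTop_of_neg (by nlinarith))
  have hupper : Tendsto (fun t ↦ (m 0 + 1) * exp (-(mu * ε) * t) - 1) atTop (𝓝 (-1)) := by
    simpa using (hexp.const_mul (m 0 + 1)).sub_const 1
  refine tendsto_of_tendsto_of_tendsto_of_le_of_le' tendsto_const_nhds hupper ?_ ?_ <;>
    filter_upwards [eventually_ge_atTop 0] with t ht
  · exact (hm t ht).le
  · linarith [h.m_add_one_le hmu.le hε.le hzε hm t ht]

end IsSolution

end ConstantMobility

/-- Low mobility regime `0 < μ ≤ λ²/8`, `m₀ ∈ (−1,0)`: the (unique) bounded solution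
`(z,m)` of the constant-mobility system on `[0,∞)` with `m(0) = m₀` satisfies
`z(t) > 0` for all `t ≥ 0`, `m` is strictly decreasing on `[0,∞)`, and `m(t) → −1`. -/
theorem constant_mobility_low_mobility_monotone_consensus
    (lam mu m₀ : ℝ) (hlam : 0 < lam) (hmu : 0 < mu) (hlow : mu ≤ lam ^ 2 / 8)
    (hm₀ : m₀ ∈ Set.Ioo (-1 : ℝ) 0)
    (z m : ℝ → ℝ)
    (hsol : ∀ t ∈ Set.Ici (0 : ℝ),
      HasDerivWithinAt z ((mu / 2) * z t * |z t| + lam * z t + 2 * m t) (Set.Ici 0) t ∧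
      HasDerivWithinAt m (-(mu * m t * |z t|) - mu * z t) (Set.Ici 0) t)
    (hbd : ∃ C : ℝ, ∀ t ∈ Set.Ici (0 : ℝ), |z t| ≤ C ∧ |m t| ≤ C)
    (hinit : m 0 = m₀) :
    (∀ t ∈ Set.Ici (0 : ℝ), 0 < z t) ∧
    StrictAntiOn m (Set.Ici (0 : ℝ)) ∧
    Filter.Tendsto m Filter.atTop (nhds (-1)) := by
  have h : ConstantMobility.IsSolution lam mu z m := hsol
  obtain ⟨C, hC⟩ := hbd
  have hzC : ∀ t ∈ Ici 0, |z t| ≤ C := fun t ht ↦ (hC t ht).1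
  subst hinit
  have hm := h.neg_one_lt_m hmu.le hzC hm₀.1
  have hz := h.z_pos hlam hmu.le hlow hzC hm hm₀.2
  have hanti := h.m_strictAntiOn hmu hz hm
  obtain ⟨ε, hε, hzε⟩ := h.exists_pos_le_z hlam.le hmu.le hz
    (fun t ht ↦ hanti.antitoneOn self_mem_Ici ht ht) hm₀.2
  exact ⟨hz, hanti, h.tendsto_m hmu hε hzε hm⟩
end

section
/- Let λ > 0, μ > 0 and ε ∈ [0,1), and let G : ℝ × ℝ → ℝ × ℝ be the crowding vector field G(z,m) = ((μ/2)·z·|z| + (μ·ε·m/2)·z² + λ·z + 2·m, −(1+ε)·μ·m·|z| − μ·(1 + ε·m²)·z). A point (z,m) with m ∈ [−1,1] satisfies G(z,m) = (0,0) if and only if (z,m) = (0,0), or (z,m) = (z₁, −1), or (z,m) = (−z₁, 1), where z₁ = (√(λ² + 4μ(1−ε)) − λ)/(μ(1−ε)) > 0. In particular, the only fixed point with |m| < 1 is the origin. -/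
/-!
The field is odd, `G(-z,-m) = -G(z,m)`, so it suffices to treat `z ≥ 0`. For `z > 0` the
second component factors as `-μ z (m + 1)(εm + 1)`, and `εm + 1 > 0` on the strip, so
`m = -1`; the first component then becomes the quadratic `(μ(1-ε)/2) z² + λz - 2`, whose only
nonnegative root is `z₁`. For `z = 0` the first component is `2m`.
-/

section Quadratic

variable {a b c : ℝ}

lemma abs_lt_sqrt_sq_add_four_mul (ha : 0 < a) (hc : 0 < c) : |b| < √(b ^ 2 + 4 * a * c) := by
  rw [← Real.sqrt_sq_eq_abs]
  exact Real.sqrt_lt_sqrt (sq_nonneg b) (by nlinarith)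

lemma quadratic_pos_root_pos (ha : 0 < a) (hc : 0 < c) :
    0 < (√(b ^ 2 + 4 * a * c) - b) / (2 * a) := by
  have := abs_lt_sqrt_sq_add_four_mul (b := b) ha hc
  exact div_pos (by linarith [le_abs_self b]) (by positivity)

lemma quadratic_eq_iff_of_nonneg (ha : 0 < a) (hc : 0 < c) {x : ℝ} (hx : 0 ≤ x) :
    a * x ^ 2 + b * x = c ↔ x = (√(b ^ 2 + 4 * a * c) - b) / (2 * a) := by
  set s := √(b ^ 2 + 4 * a * c)
  have hs : -b < s := by linarith [neg_le_abs b, abs_lt_sqrt_sq_add_four_mul (b := b) ha hc]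
  have hdiscrim : discrim a b (-c) = s * s := by
    rw [discrim, ← sq, Real.sq_sqrt (by nlinarith [sq_nonneg b])]
    ring
  have hneg_root : (-b - s) / (2 * a) < 0 := div_neg_of_neg_of_pos (by linarith) (by positivity)
  rw [← sub_eq_zero, show a * x ^ 2 + b * x - c = a * (x * x) + b * x + -c by ring,
    quadratic_eq_zero_iff ha.ne' hdiscrim, neg_add_eq_sub]
  exact or_iff_left (by intro h; linarith)

end Quadratic

noncomputable section Crowding

variable (lam mu eps : ℝ)

def crowdingField (p : ℝ × ℝ) : ℝ × ℝ :=
  ((mu / 2) * p.1 * |p.1| + (mu * eps * p.2 / 2) * p.1 ^ 2 + lam * p.1 + 2 * p.2,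
    -((1 + eps) * mu * p.2 * |p.1|) - mu * (1 + eps * p.2 ^ 2) * p.1)

def crowdingRoot : ℝ :=
  (Real.sqrt (lam ^ 2 + 4 * mu * (1 - eps)) - lam) / (mu * (1 - eps))

variable {lam mu eps}

lemma crowdingField_neg (p : ℝ × ℝ) :
    crowdingField lam mu eps (-p) = -crowdingField lam mu eps p := by
  simp only [crowdingField, Prod.fst_neg, Prod.snd_neg, abs_neg, Prod.neg_mk]
  congr 1 <;> ring

lemma crowdingField_of_nonneg {z : ℝ} (hz : 0 ≤ z) (m : ℝ) :
    crowdingField lam mu eps (z, m) =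
      (mu * (1 + eps * m) / 2 * z ^ 2 + lam * z + 2 * m,
        -(mu * z * ((m + 1) * (eps * m + 1)))) := by
  simp only [crowdingField, abs_of_nonneg hz]
  congr 1 <;> ring

lemma crowdingField_zero_left (m : ℝ) : crowdingField lam mu eps (0, m) = (2 * m, 0) := by
  simp [crowdingField]

lemma crowdingRoot_pos (hmu : 0 < mu) (heps : eps < 1) : 0 < crowdingRoot lam mu eps := by
  have h := quadratic_pos_root_pos (b := lam) (by positivity : 0 < mu * (1 - eps) / 2) two_pos
  rwa [show 4 * (mu * (1 - eps) / 2) * 2 = 4 * mu * (1 - eps) by ring,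
    show 2 * (mu * (1 - eps) / 2) = mu * (1 - eps) by ring] at h

lemma crowdingField_eq_zero_iff_of_pos (hmu : 0 < mu) (heps : |eps| < 1) {z m : ℝ} (hz : 0 < z)
    (hm : |m| ≤ 1) :
    crowdingField lam mu eps (z, m) = 0 ↔ z = crowdingRoot lam mu eps ∧ m = -1 := by
  have heps_m : 0 < eps * m + 1 := by
    have : |eps * m| < 1 := by
      rw [abs_mul]; exact mul_lt_one_of_nonneg_of_lt_one_left (abs_nonneg _) heps hm
    linarith [neg_abs_le (eps * m)]
  have hroot : ∀ w, 0 ≤ w →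
      (mu * (1 - eps) / 2 * w ^ 2 + lam * w = 2 ↔ w = crowdingRoot lam mu eps) := fun w hw => by
    rw [quadratic_eq_iff_of_nonneg (by nlinarith [le_abs_self eps]) two_pos hw, crowdingRoot]
    ring_nf
  rw [crowdingField_of_nonneg hz.le, Prod.mk_eq_zero, neg_eq_zero, mul_eq_zero,
    or_iff_right (by positivity), mul_eq_zero, or_iff_left heps_m.ne', ← hroot z hz.le]
  constructor
  · rintro ⟨hfst, hm'⟩
    obtain rfl : m = -1 := by linarith
    exact ⟨by linear_combination hfst, rfl⟩
  · rintro ⟨hfst, rfl⟩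
    exact ⟨by linear_combination hfst, by ring⟩

lemma crowdingField_eq_zero_iff (hmu : 0 < mu) (heps : |eps| < 1) {z m : ℝ} (hm : |m| ≤ 1) :
    crowdingField lam mu eps (z, m) = 0 ↔
      (z = 0 ∧ m = 0) ∨ (z = crowdingRoot lam mu eps ∧ m = -1) ∨
        (z = -crowdingRoot lam mu eps ∧ m = 1) := by
  have hroot := crowdingRoot_pos (lam := lam) hmu (abs_lt.1 heps).2
  rcases lt_trichotomy z 0 with hz | rfl | hz
  · have hodd : crowdingField lam mu eps (z, m) = 0 ↔ crowdingField lam mu eps (-z, -m) = 0 := by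
      rw [← Prod.neg_mk, crowdingField_neg, neg_eq_zero]
    rw [hodd, crowdingField_eq_zero_iff_of_pos hmu heps (neg_pos.2 hz) (by rwa [abs_neg]),
      neg_eq_iff_eq_neg, neg_inj]
    constructor
    · exact fun h => Or.inr (Or.inr h)
    · rintro (⟨h, -⟩ | ⟨h, -⟩ | h) <;> first | exact h | linarith
  · rw [crowdingField_zero_left, Prod.mk_eq_zero]
    constructor
    · rintro ⟨h, -⟩
      exact Or.inl ⟨rfl, by linarith⟩
    · rintro (⟨-, rfl⟩ | ⟨h, -⟩ | ⟨h, -⟩)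
      · norm_num
      all_goals linarith
  · rw [crowdingField_eq_zero_iff_of_pos hmu heps hz hm]
    constructor
    · exact fun h => Or.inr (Or.inl h)
    · rintro (⟨h, -⟩ | h | ⟨h, -⟩) <;> first | exact h | linarith

end Crowding

theorem crowding_fixed_points_general (lam mu eps : ℝ) (hmu : 0 < mu)
    (heps : eps ∈ Set.Ico (0 : ℝ) 1)
    (z m : ℝ) (hm : m ∈ Set.Icc (-1 : ℝ) 1) :
    let z₁ : ℝ := (Real.sqrt (lam ^ 2 + 4 * mu * (1 - eps)) - lam) / (mu * (1 - eps))
    0 < z₁ ∧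
    (((mu / 2) * z * |z| + (mu * eps * m / 2) * z ^ 2 + lam * z + 2 * m = 0 ∧
      -((1 + eps) * mu * m * |z|) - mu * (1 + eps * m ^ 2) * z = 0) ↔
      ((z = 0 ∧ m = 0) ∨ (z = z₁ ∧ m = -1) ∨ (z = -z₁ ∧ m = 1))) ∧
    (|m| < 1 →
      (((mu / 2) * z * |z| + (mu * eps * m / 2) * z ^ 2 + lam * z + 2 * m = 0 ∧
        -((1 + eps) * mu * m * |z|) - mu * (1 + eps * m ^ 2) * z = 0) →
        (z = 0 ∧ m = 0))) := by
  have heps' : |eps| < 1 := abs_lt.2 ⟨by linarith [heps.1], heps.2⟩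
  have hfixed : crowdingField lam mu eps (z, m) = 0 ↔ _ :=
    crowdingField_eq_zero_iff hmu heps' (abs_le.2 hm)
  rw [crowdingField, Prod.mk_eq_zero] at hfixed
  refine ⟨crowdingRoot_pos hmu heps.2, hfixed, fun hm_lt hG => ?_⟩
  rcases hfixed.1 hG with h | ⟨-, rfl⟩ | ⟨-, rfl⟩
  · exact h
  all_goals norm_num at hm_lt

/-- Fixed points of the crowding vector field
`G(z,m) = ((μ/2)z|z| + (μεm/2)z² + λz + 2m, −(1+ε)μm|z| − μ(1+εm²)z)` in the strip
`m ∈ [−1,1]`: they are exactly the origin and `(±z₁, ∓1)` with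
`z₁ = (√(λ² + 4μ(1−ε)) − λ)/(μ(1−ε)) > 0`.  In particular the only fixed point with
`|m| < 1` is the origin. -/
theorem crowding_fixed_points (lam mu eps : ℝ) (hlam : 0 < lam) (hmu : 0 < mu)
    (heps : eps ∈ Set.Ico (0 : ℝ) 1)
    (z m : ℝ) (hm : m ∈ Set.Icc (-1 : ℝ) 1) :
    let z₁ : ℝ := (Real.sqrt (lam ^ 2 + 4 * mu * (1 - eps)) - lam) / (mu * (1 - eps))
    0 < z₁ ∧
    (((mu / 2) * z * |z| + (mu * eps * m / 2) * z ^ 2 + lam * z + 2 * m = 0 ∧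
      -((1 + eps) * mu * m * |z|) - mu * (1 + eps * m ^ 2) * z = 0) ↔
      ((z = 0 ∧ m = 0) ∨ (z = z₁ ∧ m = -1) ∨ (z = -z₁ ∧ m = 1))) ∧
    (|m| < 1 →
      (((mu / 2) * z * |z| + (mu * eps * m / 2) * z ^ 2 + lam * z + 2 * m = 0 ∧
        -((1 + eps) * mu * m * |z|) - mu * (1 + eps * m ^ 2) * z = 0) →
        (z = 0 ∧ m = 0))) :=
  crowding_fixed_points_general lam mu eps hmu heps z m hm
end

section
/- Let λ > 0, μ > 0 and ε ∈ [0,1]. At every point (z,m) with z ≠ 0, the crowding vector field G(z,m) = ((μ/2)·z·|z| + (μ·ε·m/2)·z² + λ·z + 2·m, −(1+ε)·μ·m·|z| − μ·(1 + ε·m²)·z) is Fréchet differentiable and the trace of its derivative (the divergence of G) equals λ − ε·μ·(|z| + m·z). In particular, for ε > 0 the divergence is not of constant sign on ℝ × [−1,1]. -/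
lemma trace_prodRR (L : (ℝ × ℝ) →ₗ[ℝ] ℝ × ℝ) :
    LinearMap.trace ℝ (ℝ × ℝ) L = (L (1, 0)).1 + (L (0, 1)).2 := by
  rw [LinearMap.trace_eq_matrix_trace ℝ (Module.Basis.finTwoProd ℝ)]
  simp [Matrix.trace, LinearMap.toMatrix_apply, Fin.sum_univ_two, Matrix.diag,
    Module.Basis.finTwoProd_zero, Module.Basis.finTwoProd_one, Module.Basis.coe_finTwoProd_repr]

/-- At every point `(z,m)` with `z ≠ 0` the crowding vector field is Fréchet
differentiable, and the trace of its derivative (the divergence of `G`) equals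
`λ − ε·μ·(|z| + m·z)`.  In particular, for `ε > 0` the divergence is not of constant
sign on `ℝ × [−1,1]`. -/
theorem crowding_divergence (lam mu eps : ℝ) (hlam : 0 < lam) (hmu : 0 < mu)
    (heps : eps ∈ Set.Icc (0 : ℝ) 1) :
    let G : ℝ × ℝ → ℝ × ℝ := fun p =>
      ((mu / 2) * p.1 * |p.1| + (mu * eps * p.2 / 2) * p.1 ^ 2 + lam * p.1 + 2 * p.2,
        -((1 + eps) * mu * p.2 * |p.1|) - mu * (1 + eps * p.2 ^ 2) * p.1)
    (∀ z m : ℝ, z ≠ 0 →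
      DifferentiableAt ℝ G (z, m) ∧
      LinearMap.trace ℝ (ℝ × ℝ) (fderiv ℝ G (z, m) : (ℝ × ℝ) →ₗ[ℝ] ℝ × ℝ) =
        lam - eps * mu * (|z| + m * z)) ∧
    (0 < eps →
      ∃ p q : ℝ × ℝ, p.1 ≠ 0 ∧ q.1 ≠ 0 ∧
        p.2 ∈ Set.Icc (-1 : ℝ) 1 ∧ q.2 ∈ Set.Icc (-1 : ℝ) 1 ∧
        0 < lam - eps * mu * (|p.1| + p.2 * p.1) ∧
        lam - eps * mu * (|q.1| + q.2 * q.1) < 0) := by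
  intro G
  constructor
  · intro z m hz
    have habs : HasFDerivAt (fun p : ℝ × ℝ => |p.1|)
        ((SignType.sign z : ℝ) • ContinuousLinearMap.fst ℝ ℝ ℝ) (z, m) :=
      (hasDerivAt_abs hz).comp_hasFDerivAt (f := fun p : ℝ × ℝ => p.1) (z, m) (hasFDerivAt_fst)
    have hGG : G = fun p : ℝ × ℝ =>
        ((mu / 2) * p.1 * |p.1| + (mu * eps / 2) * p.2 * (p.1 * p.1) + lam * p.1 + 2 * p.2,
          -((1 + eps) * mu * p.2 * |p.1|) - (mu + mu * eps * (p.2 * p.2)) * p.1) := by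
      funext p
      exact Prod.ext (by ring) (by ring)
    rw [hGG]
    have h1 : HasFDerivAt (fun p : ℝ × ℝ =>
        (mu / 2) * p.1 * |p.1| + (mu * eps / 2) * p.2 * (p.1 * p.1) + lam * p.1 + 2 * p.2)
        _ (z, m) :=
      ((((hasFDerivAt_fst.const_mul (mu / 2)).mul habs).add
        ((hasFDerivAt_snd.const_mul (mu * eps / 2)).mul
          (hasFDerivAt_fst.mul hasFDerivAt_fst))).add (hasFDerivAt_fst.const_mul lam)).add
        (hasFDerivAt_snd.const_mul 2)
    have h2 : HasFDerivAt (fun p : ℝ × ℝ =>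
        -((1 + eps) * mu * p.2 * |p.1|) - (mu + mu * eps * (p.2 * p.2)) * p.1)
        _ (z, m) :=
      (((hasFDerivAt_snd.const_mul ((1 + eps) * mu)).mul habs).neg).sub
        ((((hasFDerivAt_snd.mul hasFDerivAt_snd).const_mul (mu * eps)).const_add mu).mul
          hasFDerivAt_fst)
    have hG := h1.prodMk h2
    refine ⟨hG.differentiableAt, ?_⟩
    rw [hG.fderiv, trace_prodRR]
    have hsz : (SignType.sign z : ℝ) * z = |z| := by
      rcases lt_or_gt_of_ne hz with h | h
      · simp [sign_neg h, abs_of_neg h]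
      · simp [sign_pos h, abs_of_pos h]
    have hsz' : (SignType.sign z : ℝ) = |z| / z := by
      rw [eq_div_iff hz, hsz]
    simp only [ContinuousLinearMap.prod_apply, ContinuousLinearMap.add_apply,
      ContinuousLinearMap.sub_apply, ContinuousLinearMap.neg_apply,
      ContinuousLinearMap.smul_apply, ContinuousLinearMap.coe_fst',
      ContinuousLinearMap.coe_snd', ContinuousLinearMap.coe_comp',
      Function.comp_apply, smul_eq_mul, ContinuousLinearMap.coe_coe, Pi.mul_apply]
    field_simp [hsz']
    linear_combination mu * hsz
  · intro hε
    refine ⟨(-1, 1), ((lam + 1) / (eps * mu), 1), by norm_num, ?_, by norm_num,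
      by norm_num, ?_, ?_⟩
    · positivity
    · simp [hlam]
    · have h : |((lam + 1) / (eps * mu))| = (lam + 1) / (eps * mu) := abs_of_pos (by positivity)
      rw [h]
      have hem : 0 < eps * mu := by positivity
      have : eps * mu * ((lam + 1) / (eps * mu) + 1 * ((lam + 1) / (eps * mu)))
          = 2 * (lam + 1) := by field_simp; ring
      rw [this]; linarith
end
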